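/- arXiv:1105.5778 — 13 statements merged into one kernel-verified Lean document; each statement's English description precedes it below -/
import Mathlib

section
/- Let a < b be real numbers and let f : [a,b] → ℝ be twice differentiable, with real constants m and M such that m ≤ f''(x) ≤ M for all x ∈ [a,b]. Then for every λ ∈ [0,1], m·(1−2λ)²(a−b)²/8 ≤ (f(λa + (1−λ)b) + f((1−λ)a + λb))/2 − f((a+b)/2) ≤ M·(1−2λ)²(a−b)²/8. -/
lemma aux_convex (a b : ℝ) (f f' f'' : ℝ → ℝ) (c : ℝ)
    (hf' : ∀ x ∈ Set.Icc a b, HasDerivWithinAt f (f' x) (Set.Icc a b) x)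
    (hf'' : ∀ x ∈ Set.Icc a b, HasDerivWithinAt f' (f'' x) (Set.Icc a b) x)
    (hc : ∀ x ∈ Set.Icc a b, c ≤ f'' x) :
    ConvexOn ℝ (Set.Icc a b) (fun x => f x - c * x ^ 2 / 2) := by
  apply convexOn_of_hasDerivWithinAt2_nonneg (f' := fun x => f' x - c * x)
    (f'' := fun x => f'' x - c) (convex_Icc a b)
  · exact ContinuousOn.sub (fun x hx => (hf' x hx).continuousWithinAt) (by fun_prop)
  · intro x hx
    have hx' : x ∈ Set.Icc a b := interior_subset hx
    exact (((hf' x hx').sub (((hasDerivWithinAt_id x _).pow 2).const_mul c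
      |>.div_const 2)).congr_deriv (by simp only [id_eq]; ring)).mono interior_subset
  · intro x hx
    have hx' : x ∈ Set.Icc a b := interior_subset hx
    exact ((hf'' x hx').sub (((hasDerivWithinAt_id x _).const_mul c).congr_deriv
      (by ring))).mono interior_subset
  · intro x hx
    have := hc x (interior_subset hx)
    linarith

/-- Corollary: for a twice differentiable `f : [a,b] → ℝ` with `m ≤ f'' ≤ M` on `[a,b]`,
`m·(1−2λ)²(a−b)²/8 ≤ (f(λa+(1−λ)b) + f((1−λ)a+λb))/2 − f((a+b)/2) ≤ M·(1−2λ)²(a−b)²/8`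
for all `λ ∈ [0,1]`. -/
theorem fejer_stmt_1 (a b : ℝ) (hab : a < b) (f f' f'' : ℝ → ℝ) (m M : ℝ)
    (hf' : ∀ x ∈ Set.Icc a b, HasDerivWithinAt f (f' x) (Set.Icc a b) x)
    (hf'' : ∀ x ∈ Set.Icc a b, HasDerivWithinAt f' (f'' x) (Set.Icc a b) x)
    (hm : ∀ x ∈ Set.Icc a b, m ≤ f'' x)
    (hM : ∀ x ∈ Set.Icc a b, f'' x ≤ M)
    (l : ℝ) (hl : l ∈ Set.Icc (0 : ℝ) 1) :
    m * (1 - 2 * l) ^ 2 * (a - b) ^ 2 / 8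
        ≤ (f (l * a + (1 - l) * b) + f ((1 - l) * a + l * b)) / 2 - f ((a + b) / 2) ∧
    (f (l * a + (1 - l) * b) + f ((1 - l) * a + l * b)) / 2 - f ((a + b) / 2)
        ≤ M * (1 - 2 * l) ^ 2 * (a - b) ^ 2 / 8 := by
  obtain ⟨hl0, hl1⟩ := hl
  set u := l * a + (1 - l) * b with hu
  set v := (1 - l) * a + l * b with hv
  have hu_mem : u ∈ Set.Icc a b := ⟨by nlinarith, by nlinarith⟩
  have hv_mem : v ∈ Set.Icc a b := ⟨by nlinarith, by nlinarith⟩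
  have hg1 := aux_convex a b f f' f'' m hf' hf'' hm
  have hg2 := aux_convex a b (fun x => -f x) (fun x => -f' x) (fun x => -f'' x) (-M)
    (fun x hx => (hf' x hx).neg) (fun x hx => (hf'' x hx).neg)
    (fun x hx => by simpa using neg_le_neg (hM x hx))
  have h1 := hg1.2 hu_mem hv_mem (by norm_num : (0:ℝ) ≤ 1/2) (by norm_num : (0:ℝ) ≤ 1/2)
    (by norm_num)
  have h2 := hg2.2 hu_mem hv_mem (by norm_num : (0:ℝ) ≤ 1/2) (by norm_num : (0:ℝ) ≤ 1/2)
    (by norm_num)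
  simp only [smul_eq_mul] at h1 h2
  have hmid : (1/2 : ℝ) * u + (1/2 : ℝ) * v = (a + b) / 2 := by rw [hu, hv]; ring
  rw [hmid] at h1 h2
  constructor <;> nlinarith [h1, h2]
end

section
/- Let a < b be real numbers, let f : [a,b] → ℝ be twice differentiable with real constants m and M such that m ≤ f''(x) ≤ M for all x ∈ [a,b], and let g : [a,b] → ℝ be integrable, nonnegative, and symmetric about (a+b)/2 (i.e. g(x) = g(a+b−x) for all x ∈ [a,b]). Then (m/2)·∫_a^b (t−a)(b−t)g(t) dt ≤ ((f(a)+f(b))/2)·∫_a^b g(t) dt − ∫_a^b f(t)g(t) dt ≤ (M/2)·∫_a^b (t−a)(b−t)g(t) dt. -/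
/-!
If `m ≤ f''` on `[a, b]`, then `f - m x² / 2` is convex, so it lies below its chord; since the chord
of `x²` exceeds `x²` by exactly `(t - a)(b - t)`, this says `f t + m/2 (t - a)(b - t)` lies below
the chord `L` of `f`. Integrating against `g ≥ 0` gives the lower bound, once one knows that
`∫ L g = (f a + f b)/2 ∫ g`: the reflection `t ↦ a + b - t` preserves `g` and maps `L` to the
affine function `f a + f b - L`. The upper bound is the lower bound for `-f`.
-/

open MeasureTheory Set

lemma convexOn_sub_half_mul_sq {D : Set ℝ} (hD : Convex ℝ D) {f f' f'' : ℝ → ℝ} {m : ℝ}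
    (hf' : ∀ x ∈ D, HasDerivWithinAt f (f' x) D x)
    (hf'' : ∀ x ∈ D, HasDerivWithinAt f' (f'' x) D x)
    (hm : ∀ x ∈ D, m ≤ f'' x) :
    ConvexOn ℝ D (fun x => f x - m / 2 * x ^ 2) := by
  refine convexOn_of_hasDerivWithinAt2_nonneg hD (f' := fun x => f' x - m * x)
    (f'' := fun x => f'' x - m) (fun x hx => (hf' x hx).continuousWithinAt.sub (by fun_prop))
    (fun x hx => ?_) (fun x hx => ?_) (fun x hx => sub_nonneg.2 (hm x (interior_subset hx)))
  · have hsq : HasDerivWithinAt (fun x : ℝ => m / 2 * x ^ 2) (m * x) (interior D) x :=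
      ((hasDerivAt_pow 2 x).const_mul (m / 2)).hasDerivWithinAt.congr_deriv (by ring)
    exact ((hf' x (interior_subset hx)).mono interior_subset).sub hsq
  · have hlin : HasDerivWithinAt (fun x : ℝ => m * x) m (interior D) x := by
      simpa using ((hasDerivAt_id x).const_mul m).hasDerivWithinAt
    exact ((hf'' x (interior_subset hx)).mono interior_subset).sub hlin

lemma mul_add_half_mul_le_secant {a b t : ℝ} (ht : t ∈ Ioo a b) {f f' f'' : ℝ → ℝ} {m : ℝ}
    (hf' : ∀ x ∈ Icc a b, HasDerivWithinAt f (f' x) (Icc a b) x)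
    (hf'' : ∀ x ∈ Icc a b, HasDerivWithinAt f' (f'' x) (Icc a b) x)
    (hm : ∀ x ∈ Icc a b, m ≤ f'' x) :
    (b - a) * (f t + m / 2 * ((t - a) * (b - t))) ≤ (b - t) * f a + (t - a) * f b := by
  have hab : a ≤ b := (ht.1.trans ht.2).le
  have hchord := (convexOn_sub_half_mul_sq (convex_Icc a b) hf' hf'' hm).secant_mono_aux1
    (left_mem_Icc.2 hab) (right_mem_Icc.2 hab) ht.1 ht.2
  linear_combination hchord

lemma integral_comp_add_sub_mul_of_symm {a b : ℝ} (hab : a ≤ b) {g : ℝ → ℝ}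
    (hg : ∀ x ∈ Icc a b, g x = g (a + b - x)) (h : ℝ → ℝ) :
    ∫ t in a..b, h (a + b - t) * g t = ∫ t in a..b, h t * g t := by
  calc ∫ t in a..b, h (a + b - t) * g t
      = ∫ t in a..b, h (a + b - t) * g (a + b - t) := by
        refine intervalIntegral.integral_congr fun t ht => ?_
        rw [uIcc_of_le hab] at ht
        simp only [← hg t ht]
    _ = ∫ t in a..b, h t * g t := by
        simpa using
          intervalIntegral.integral_comp_sub_left (a := a) (b := b) (fun t => h t * g t) (a + b)

lemma integral_secant_mul_of_symm {a b : ℝ} (hab : a ≤ b) {g : ℝ → ℝ}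
    (hgi : IntervalIntegrable g volume a b) (hg : ∀ x ∈ Icc a b, g x = g (a + b - x)) (u v : ℝ) :
    ∫ t in a..b, ((b - t) * u + (t - a) * v) * g t = (b - a) * (u + v) / 2 * ∫ t in a..b, g t := by
  have hreflect :=
    integral_comp_add_sub_mul_of_symm hab hg (fun t => (b - t) * u + (t - a) * v)
  have hsum : (∫ t in a..b, ((b - (a + b - t)) * u + (a + b - t - a) * v) * g t)
      + ∫ t in a..b, ((b - t) * u + (t - a) * v) * g t
      = (b - a) * (u + v) * ∫ t in a..b, g t := by
    rw [← intervalIntegral.integral_add (hgi.continuousOn_mul (by fun_prop))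
      (hgi.continuousOn_mul (by fun_prop)), ← intervalIntegral.integral_const_mul]
    congr 1
    ext t
    ring
  linarith

theorem fejer_lower_bound_of_le_deriv2 {a b : ℝ} (hab : a < b) {f f' f'' g : ℝ → ℝ} {m : ℝ}
    (hf' : ∀ x ∈ Icc a b, HasDerivWithinAt f (f' x) (Icc a b) x)
    (hf'' : ∀ x ∈ Icc a b, HasDerivWithinAt f' (f'' x) (Icc a b) x)
    (hm : ∀ x ∈ Icc a b, m ≤ f'' x)
    (hg : IntervalIntegrable g volume a b)
    (hg0 : ∀ x ∈ Icc a b, 0 ≤ g x)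
    (hgsymm : ∀ x ∈ Icc a b, g x = g (a + b - x)) :
    m / 2 * ∫ t in a..b, (t - a) * (b - t) * g t
        ≤ (f a + f b) / 2 * (∫ t in a..b, g t) - ∫ t in a..b, f t * g t := by
  have hfc : ContinuousOn f (uIcc a b) := by
    rw [uIcc_of_le hab.le]
    exact fun x hx => (hf' x hx).continuousWithinAt
  have hfg : IntervalIntegrable (fun t => f t * g t) volume a b := hg.continuousOn_mul hfc
  have hqg : IntervalIntegrable (fun t => (t - a) * (b - t) * g t) volume a b :=
    hg.continuousOn_mul (by fun_prop)
  have hpointwise : ∀ t ∈ Ioo a b,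
      (b - a) * (f t * g t) + (b - a) * (m / 2) * ((t - a) * (b - t) * g t)
        ≤ ((b - t) * f a + (t - a) * f b) * g t := fun t ht => by
    have hbound := mul_le_mul_of_nonneg_right (mul_add_half_mul_le_secant ht hf' hf'' hm)
      (hg0 t (Ioo_subset_Icc_self ht))
    linear_combination hbound
  have hintegral := intervalIntegral.integral_mono_on_of_le_Ioo hab.le
    ((hfg.const_mul _).add (hqg.const_mul _)) (hg.continuousOn_mul (by fun_prop)) hpointwise
  rw [intervalIntegral.integral_add (hfg.const_mul _) (hqg.const_mul _),
    intervalIntegral.integral_const_mul, intervalIntegral.integral_const_mul,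
    integral_secant_mul_of_symm hab.le hg hgsymm] at hintegral
  refine le_of_mul_le_mul_left ?_ (sub_pos.2 hab)
  linear_combination hintegral

/-- Theorem (Fejér-type, inequality (1)): for twice differentiable `f` with `m ≤ f'' ≤ M`
on `[a,b]` and `g` integrable, nonnegative, symmetric about `(a+b)/2`,
`(m/2)·∫ (t−a)(b−t)g(t) ≤ ((f(a)+f(b))/2)·∫ g − ∫ f·g ≤ (M/2)·∫ (t−a)(b−t)g(t)`. -/
theorem fejer_stmt_2 (a b : ℝ) (hab : a < b) (f f' f'' g : ℝ → ℝ) (m M : ℝ)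
    (hf' : ∀ x ∈ Set.Icc a b, HasDerivWithinAt f (f' x) (Set.Icc a b) x)
    (hf'' : ∀ x ∈ Set.Icc a b, HasDerivWithinAt f' (f'' x) (Set.Icc a b) x)
    (hm : ∀ x ∈ Set.Icc a b, m ≤ f'' x)
    (hM : ∀ x ∈ Set.Icc a b, f'' x ≤ M)
    (hg : IntervalIntegrable g volume a b)
    (hg0 : ∀ x ∈ Set.Icc a b, 0 ≤ g x)
    (hgsymm : ∀ x ∈ Set.Icc a b, g x = g (a + b - x)) :
    m / 2 * ∫ t in a..b, (t - a) * (b - t) * g t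
        ≤ (f a + f b) / 2 * (∫ t in a..b, g t) - ∫ t in a..b, f t * g t ∧
    (f a + f b) / 2 * (∫ t in a..b, g t) - (∫ t in a..b, f t * g t)
        ≤ M / 2 * ∫ t in a..b, (t - a) * (b - t) * g t := by
  refine ⟨fejer_lower_bound_of_le_deriv2 hab hf' hf'' hm hg hg0 hgsymm, ?_⟩
  have hneg := fejer_lower_bound_of_le_deriv2 hab (f := -f) (f' := -f') (f'' := -f'')
    (m := -M) (fun x hx => (hf' x hx).neg) (fun x hx => (hf'' x hx).neg)
    (fun x hx => neg_le_neg (hM x hx)) hg hg0 hgsymm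
  simp only [Pi.neg_apply, neg_mul, intervalIntegral.integral_neg] at hneg
  linarith
end

section
/- Let a < b be real numbers, let f : [a,b] → ℝ be twice differentiable with real constants m and M such that m ≤ f''(x) ≤ M for all x ∈ [a,b], and let g : [a,b] → ℝ be integrable, nonnegative, and symmetric about (a+b)/2 (i.e. g(x) = g(a+b−x) for all x ∈ [a,b]). Then (m/8)·∫_a^b (2t−a−b)² g(t) dt ≤ ∫_a^b f(t)g(t) dt − f((a+b)/2)·∫_a^b g(t) dt ≤ (M/8)·∫_a^b (2t−a−b)² g(t) dt. -/
/-!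
Expanding `f` to second order around the midpoint `c = (a+b)/2`, the remainder
`f t - f c - f' c (t - c)` lies between `m (t - c)² / 2` and `M (t - c)² / 2`. Weighting by `g`
and integrating, the first-order term drops out because `(t - c) g t` is odd about `c`.
-/

open MeasureTheory intervalIntegral Set

section Taylor

variable {D : Set ℝ} {f f' f'' : ℝ → ℝ} {c x m M : ℝ}

theorem ConvexOn.tangent_le_of_hasDerivWithinAt {d : ℝ} (hf : ConvexOn ℝ D f)
    (hc : c ∈ D) (hx : x ∈ D) (hd : HasDerivWithinAt f d D c) :
    f c + d * (x - c) ≤ f x := by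
  rcases lt_trichotomy c x with hcx | rfl | hxc
  · have := hf.le_slope_of_hasDerivWithinAt hc hx hcx hd
    rw [slope_def_field, le_div_iff₀ (sub_pos.2 hcx)] at this
    linarith
  · simp
  · have := hf.slope_le_of_hasDerivWithinAt hx hc hxc hd
    rw [slope_def_field, div_le_iff₀ (sub_pos.2 hxc)] at this
    linarith

theorem mul_sq_le_taylor_remainder_of_le_deriv2 (hD : Convex ℝ D)
    (hf' : ∀ y ∈ D, HasDerivWithinAt f (f' y) D y)
    (hf'' : ∀ y ∈ D, HasDerivWithinAt f' (f'' y) D y)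
    (hm : ∀ y ∈ D, m ≤ f'' y) (hc : c ∈ D) (hx : x ∈ D) :
    m / 2 * (x - c) ^ 2 ≤ f x - f c - f' c * (x - c) := by
  have hφ' : ∀ y ∈ D, HasDerivWithinAt (fun y ↦ f y - m / 2 * y ^ 2) (f' y - m * y) D y :=
    fun y hy ↦ ((hf' y hy).sub ((hasDerivWithinAt_pow 2 y).const_mul (m / 2))).congr_deriv
      (by ring)
  have hφ'' : ∀ y ∈ D, HasDerivWithinAt (fun y ↦ f' y - m * y) (f'' y - m) D y :=
    fun y hy ↦ ((hf'' y hy).sub ((hasDerivWithinAt_id y D).const_mul m)).congr_deriv (by simp)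
  have hconvex : ConvexOn ℝ D (fun y ↦ f y - m / 2 * y ^ 2) :=
    convexOn_of_hasDerivWithinAt2_nonneg hD (fun y hy ↦ (hφ' y hy).continuousWithinAt)
      (fun y hy ↦ (hφ' y (interior_subset hy)).mono interior_subset)
      (fun y hy ↦ (hφ'' y (interior_subset hy)).mono interior_subset)
      (fun y hy ↦ sub_nonneg.2 (hm y (interior_subset hy)))
  have := hconvex.tangent_le_of_hasDerivWithinAt hc hx (hφ' c hc)
  linarith

theorem taylor_remainder_le_mul_sq_of_deriv2_le (hD : Convex ℝ D)
    (hf' : ∀ y ∈ D, HasDerivWithinAt f (f' y) D y)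
    (hf'' : ∀ y ∈ D, HasDerivWithinAt f' (f'' y) D y)
    (hM : ∀ y ∈ D, f'' y ≤ M) (hc : c ∈ D) (hx : x ∈ D) :
    f x - f c - f' c * (x - c) ≤ M / 2 * (x - c) ^ 2 := by
  have := mul_sq_le_taylor_remainder_of_le_deriv2 (f := -f) (f' := -f') (f'' := -f'') (m := -M)
    hD (fun y hy ↦ (hf' y hy).neg) (fun y hy ↦ (hf'' y hy).neg)
    (fun y hy ↦ neg_le_neg (hM y hy)) hc hx
  simp only [Pi.neg_apply] at this
  linarith

end Taylor

section SymmetricWeight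

variable {a b d e : ℝ} {f g : ℝ → ℝ}

theorem integral_sub_midpoint_mul_eq_zero_of_symm (hg : ∀ x ∈ uIcc a b, g x = g (a + b - x)) :
    ∫ t in a..b, (t - (a + b) / 2) * g t = 0 := by
  have hreflect : ∫ t in a..b, (t - (a + b) / 2) * g t
      = ∫ t in a..b, (a + b - t - (a + b) / 2) * g (a + b - t) := by
    simpa using (integral_comp_sub_left (a := a) (b := b) (fun t ↦ (t - (a + b) / 2) * g t)
      (a + b)).symm
  have hodd : ∫ t in a..b, (a + b - t - (a + b) / 2) * g (a + b - t)
      = -∫ t in a..b, (t - (a + b) / 2) * g t := by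
    rw [← intervalIntegral.integral_neg]
    refine integral_congr fun t ht ↦ ?_
    simp only [← hg t ht]
    ring
  linarith

theorem integral_sub_linear_mul_of_symm (hg : IntervalIntegrable g volume a b)
    (hfg : IntervalIntegrable (fun t ↦ f t * g t) volume a b)
    (hsymm : ∀ x ∈ uIcc a b, g x = g (a + b - x)) :
    ∫ t in a..b, (f t - e - d * (t - (a + b) / 2)) * g t
      = (∫ t in a..b, f t * g t) - e * ∫ t in a..b, g t := by
  have hlin : IntervalIntegrable (fun t ↦ (t - (a + b) / 2) * g t) volume a b :=
    hg.continuousOn_mul (by fun_prop)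
  calc ∫ t in a..b, (f t - e - d * (t - (a + b) / 2)) * g t
      = ∫ t in a..b, (f t * g t - e * g t) - d * ((t - (a + b) / 2) * g t) :=
        integral_congr fun t _ ↦ by ring
    _ = (∫ t in a..b, f t * g t) - e * (∫ t in a..b, g t)
          - d * ∫ t in a..b, (t - (a + b) / 2) * g t := by
        rw [integral_sub (hfg.sub (hg.const_mul e)) (hlin.const_mul d),
          integral_sub hfg (hg.const_mul e), intervalIntegral.integral_const_mul,
          intervalIntegral.integral_const_mul]
    _ = (∫ t in a..b, f t * g t) - e * ∫ t in a..b, g t := by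
        rw [integral_sub_midpoint_mul_eq_zero_of_symm hsymm, mul_zero, sub_zero]

end SymmetricWeight

/-- Theorem (Fejér-type, inequality (2)): for twice differentiable `f` with `m ≤ f'' ≤ M`
on `[a,b]` and `g` integrable, nonnegative, symmetric about `(a+b)/2`,
`(m/8)·∫ (2t−a−b)²g(t) ≤ ∫ f·g − f((a+b)/2)·∫ g ≤ (M/8)·∫ (2t−a−b)²g(t)`. -/
theorem fejer_stmt_3 (a b : ℝ) (hab : a < b) (f f' f'' g : ℝ → ℝ) (m M : ℝ)
    (hf' : ∀ x ∈ Set.Icc a b, HasDerivWithinAt f (f' x) (Set.Icc a b) x)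
    (hf'' : ∀ x ∈ Set.Icc a b, HasDerivWithinAt f' (f'' x) (Set.Icc a b) x)
    (hm : ∀ x ∈ Set.Icc a b, m ≤ f'' x)
    (hM : ∀ x ∈ Set.Icc a b, f'' x ≤ M)
    (hg : IntervalIntegrable g volume a b)
    (hg0 : ∀ x ∈ Set.Icc a b, 0 ≤ g x)
    (hgsymm : ∀ x ∈ Set.Icc a b, g x = g (a + b - x)) :
    m / 8 * ∫ t in a..b, (2 * t - a - b) ^ 2 * g t
        ≤ (∫ t in a..b, f t * g t) - f ((a + b) / 2) * ∫ t in a..b, g t ∧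
    (∫ t in a..b, f t * g t) - f ((a + b) / 2) * (∫ t in a..b, g t)
        ≤ M / 8 * ∫ t in a..b, (2 * t - a - b) ^ 2 * g t := by
  have hc : (a + b) / 2 ∈ Icc a b := ⟨by linarith, by linarith⟩
  set c := (a + b) / 2
  have huIcc : uIcc a b = Icc a b := uIcc_of_le hab.le
  have hfcont : ContinuousOn f (uIcc a b) :=
    huIcc ▸ fun x hx ↦ (hf' x hx).continuousWithinAt
  have hquad (K : ℝ) : K / 8 * ∫ t in a..b, (2 * t - a - b) ^ 2 * g t
      = ∫ t in a..b, K / 2 * (t - c) ^ 2 * g t := by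
    rw [← intervalIntegral.integral_const_mul]
    exact integral_congr fun t _ ↦ by ring
  have hquadInt (K : ℝ) : IntervalIntegrable (fun t ↦ K / 2 * (t - c) ^ 2 * g t) volume a b :=
    hg.continuousOn_mul (by fun_prop)
  have hremInt : IntervalIntegrable (fun t ↦ (f t - f c - f' c * (t - c)) * g t) volume a b :=
    hg.continuousOn_mul (by fun_prop)
  rw [← integral_sub_linear_mul_of_symm (d := f' c) hg (hg.continuousOn_mul hfcont)
    (huIcc ▸ hgsymm), hquad, hquad]
  constructor
  · refine integral_mono_on hab.le (hquadInt m) hremInt fun t ht ↦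
      mul_le_mul_of_nonneg_right ?_ (hg0 t ht)
    exact mul_sq_le_taylor_remainder_of_le_deriv2 (convex_Icc a b) hf' hf'' hm hc ht
  · refine integral_mono_on hab.le hremInt (hquadInt M) fun t ht ↦
      mul_le_mul_of_nonneg_right ?_ (hg0 t ht)
    exact taylor_remainder_le_mul_sq_of_deriv2_le (convex_Icc a b) hf' hf'' hM hc ht
end

section
/- Let a < b be real numbers, let f : [a,b] → ℝ be twice differentiable with a real constant M such that f''(x) ≤ M for all x ∈ [a,b], and let g : [a,b] → [0,1] be integrable and symmetric about (a+b)/2 (i.e. g(x) = g(a+b−x) for all x ∈ [a,b]). Then (b−a)·( M(b−a)²/12 − (f(a)+f(b))/2 + (1/(b−a))∫_a^b f(t) dt ) ≥ (M/2)·∫_a^b (t−a)(b−t)g(t) dt − ((f(a)+f(b))/2)·∫_a^b g(t) dt + ∫_a^b f(t)g(t) dt ≥ 0. -/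
/-!
Put `u t = f t + M/2 * (t - a) * (b - t)`. Then `u'' = f'' - M ≤ 0`, so `u` is concave, and `u`
agrees with `f` at `a` and `b`. With `c = (f a + f b)/2`, the middle expression is `∫ (u - c) g`
and the left one is `∫ (u - c)`, since `∫ (t - a)(b - t) = (b - a)³/6`. Concavity gives
`u t + u (a + b - t) ≥ u a + u b`, so `φ t = u t + u (a + b - t) - 2c ≥ 0`; by the symmetry of `g`,
`2 ∫ (u - c) g = ∫ φ g`, which lies between `0` and `∫ φ = 2 ∫ (u - c)` because `0 ≤ g ≤ 1`.
-/

open MeasureTheory intervalIntegral Set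

theorem integral_sub_mul_sub (a b : ℝ) : ∫ t in a..b, (t - a) * (b - t) = (b - a) ^ 3 / 6 := by
  have hpoly : ∀ t : ℝ, (t - a) * (b - t) = (a + b) * t - t ^ 2 - a * b := fun t => by ring
  simp only [hpoly]
  rw [intervalIntegral.integral_sub
      ((by fun_prop : Continuous fun t : ℝ => (a + b) * t - t ^ 2).intervalIntegrable a b)
      intervalIntegrable_const,
    intervalIntegral.integral_sub
      ((by fun_prop : Continuous fun t : ℝ => (a + b) * t).intervalIntegrable a b)
      ((continuous_pow 2).intervalIntegrable a b),
    intervalIntegral.integral_const_mul, integral_id, integral_pow, intervalIntegral.integral_const,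
    smul_eq_mul]
  ring

theorem concaveOn_add_mul_sub_mul_sub {D : Set ℝ} (hD : Convex ℝ D) {f f' f'' : ℝ → ℝ} {M : ℝ}
    (hf : ContinuousOn f D) (hf' : ∀ x ∈ interior D, HasDerivWithinAt f (f' x) (interior D) x)
    (hf'' : ∀ x ∈ interior D, HasDerivWithinAt f' (f'' x) (interior D) x)
    (hM : ∀ x ∈ interior D, f'' x ≤ M) (a b : ℝ) :
    ConcaveOn ℝ D (fun t => f t + M / 2 * ((t - a) * (b - t))) := by
  refine concaveOn_of_hasDerivWithinAt2_nonpos hD (hf.add (by fun_prop))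
    (f' := fun x => f' x + M / 2 * (a + b - 2 * x)) (f'' := fun x => f'' x - M)
    (fun x hx => ?_) (fun x hx => ?_) (fun x hx => sub_nonpos.2 (hM x hx))
  · have hq : HasDerivAt (fun t => (t - a) * (b - t)) (1 * (b - x) + (x - a) * (0 - 1)) x :=
      ((hasDerivAt_id x).sub_const a).mul ((hasDerivAt_const x b).sub (hasDerivAt_id x))
    exact ((hf' x hx).add ((hq.const_mul (M / 2)).hasDerivWithinAt)).congr_deriv (by ring)
  · have hl : HasDerivAt (fun t => M / 2 * (a + b - 2 * t)) (M / 2 * (0 - 2 * 1)) x :=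
      ((hasDerivAt_const x (a + b)).sub ((hasDerivAt_id x).const_mul 2)).const_mul (M / 2)
    exact ((hf'' x hx).add hl.hasDerivWithinAt).congr_deriv (by ring)

theorem ConcaveOn.map_endpoints_add_le {a b t : ℝ} {u : ℝ → ℝ} (hu : ConcaveOn ℝ (Icc a b) u)
    (ht : t ∈ Icc a b) : u a + u b ≤ u t + u (a + b - t) := by
  have hab : a ≤ b := ht.1.trans ht.2
  obtain ⟨θ, η, hθ, hη, hθη, rfl⟩ := (segment_eq_Icc hab).symm ▸ ht
  have hreflect : a + b - (θ • a + η • b) = η • a + θ • b := by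
    simp only [smul_eq_mul]; linear_combination -(a + b) * hθη
  have ha : a ∈ Icc a b := left_mem_Icc.2 hab
  have hb : b ∈ Icc a b := right_mem_Icc.2 hab
  have h₁ := hu.2 ha hb hθ hη hθη
  have h₂ := hu.2 ha hb hη hθ ((add_comm η θ).trans hθη)
  rw [hreflect]
  simp only [smul_eq_mul] at h₁ h₂ ⊢
  linear_combination h₁ + h₂ - (u a + u b) * hθη

theorem integral_comp_reflect_mul_of_symm {a b : ℝ} (hab : a ≤ b) (h g : ℝ → ℝ)
    (hgsymm : ∀ x ∈ Icc a b, g x = g (a + b - x)) :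
    ∫ t in a..b, h (a + b - t) * g t = ∫ t in a..b, h t * g t := by
  calc ∫ t in a..b, h (a + b - t) * g t = ∫ t in a..b, h (a + b - t) * g (a + b - t) :=
        intervalIntegral.integral_congr fun x hx => by rw [← hgsymm x (uIcc_of_le hab ▸ hx)]
    _ = ∫ t in a..b, h t * g t := by
        rw [intervalIntegral.integral_comp_sub_left (fun t => h t * g t) (a + b),
          add_sub_cancel_right, add_sub_cancel_left]

theorem ConcaveOn.integral_sub_endpoint_mean_mul_mem_Icc {a b : ℝ} (hab : a ≤ b) {u g : ℝ → ℝ}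
    (hu : ConcaveOn ℝ (Icc a b) u) (huc : ContinuousOn u (Icc a b))
    (hg : IntervalIntegrable g volume a b) (hg01 : ∀ x ∈ Icc a b, g x ∈ Icc (0 : ℝ) 1)
    (hgsymm : ∀ x ∈ Icc a b, g x = g (a + b - x)) :
    ∫ t in a..b, (u t - (u a + u b) / 2) * g t ∈ Icc 0 (∫ t in a..b, (u t - (u a + u b) / 2)) := by
  set h : ℝ → ℝ := fun t => u t - (u a + u b) / 2
  set φ : ℝ → ℝ := fun t => h t + h (a + b - t)
  have hφ_nonneg : ∀ t ∈ Icc a b, 0 ≤ φ t := fun t ht => by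
    simp only [φ, h]
    linarith [hu.map_endpoints_add_le ht]
  have hreflect_mapsTo : MapsTo (fun t => a + b - t) (Icc a b) (Icc a b) :=
    fun t ht => ⟨by linarith [ht.2], by linarith [ht.1]⟩
  have hhc : ContinuousOn h (Icc a b) := huc.sub continuousOn_const
  have hhc' : ContinuousOn (fun t => h (a + b - t)) (Icc a b) :=
    hhc.comp (by fun_prop) hreflect_mapsTo
  rw [← uIcc_of_le hab] at hhc hhc'
  have hφg : ∫ t in a..b, φ t * g t = 2 * ∫ t in a..b, h t * g t := by
    simp only [φ, add_mul]
    rw [intervalIntegral.integral_add (hg.continuousOn_mul hhc) (hg.continuousOn_mul hhc'),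
      integral_comp_reflect_mul_of_symm hab h g hgsymm]
    ring
  have hφ : ∫ t in a..b, φ t = 2 * ∫ t in a..b, h t := by
    rw [intervalIntegral.integral_add hhc.intervalIntegrable hhc'.intervalIntegrable,
      intervalIntegral.integral_comp_sub_left h (a + b), add_sub_cancel_right, add_sub_cancel_left]
    ring
  have hφg_nonneg : 0 ≤ ∫ t in a..b, φ t * g t :=
    intervalIntegral.integral_nonneg hab fun t ht => mul_nonneg (hφ_nonneg t ht) (hg01 t ht).1
  have hφg_le : ∫ t in a..b, φ t * g t ≤ ∫ t in a..b, φ t :=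
    intervalIntegral.integral_mono_on hab (hg.continuousOn_mul (hhc.add hhc'))
      (hhc.add hhc').intervalIntegrable fun t ht =>
        mul_le_of_le_one_right (hφ_nonneg t ht) (hg01 t ht).2
  constructor <;> linarith

/-- Remark (estimate of precision in (1), upper-bound version): with `f'' ≤ M` on `[a,b]`
and `g : [a,b] → [0,1]` integrable and symmetric about `(a+b)/2`,
`(b−a)·(M(b−a)²/12 − (f(a)+f(b))/2 + (1/(b−a))∫f)
  ≥ (M/2)·∫(t−a)(b−t)g(t) − ((f(a)+f(b))/2)·∫g + ∫f·g ≥ 0`. -/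
theorem fejer_stmt_5 (a b : ℝ) (hab : a < b) (f f' f'' g : ℝ → ℝ) (M : ℝ)
    (hf' : ∀ x ∈ Set.Icc a b, HasDerivWithinAt f (f' x) (Set.Icc a b) x)
    (hf'' : ∀ x ∈ Set.Icc a b, HasDerivWithinAt f' (f'' x) (Set.Icc a b) x)
    (hM : ∀ x ∈ Set.Icc a b, f'' x ≤ M)
    (hg : IntervalIntegrable g volume a b)
    (hg01 : ∀ x ∈ Set.Icc a b, g x ∈ Set.Icc (0 : ℝ) 1)
    (hgsymm : ∀ x ∈ Set.Icc a b, g x = g (a + b - x)) :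
    M / 2 * (∫ t in a..b, (t - a) * (b - t) * g t)
        - (f a + f b) / 2 * (∫ t in a..b, g t) + (∫ t in a..b, f t * g t)
      ≤ (b - a) * (M * (b - a) ^ 2 / 12 - (f a + f b) / 2
          + (1 / (b - a)) * (∫ t in a..b, f t)) ∧
    0 ≤ M / 2 * (∫ t in a..b, (t - a) * (b - t) * g t)
        - (f a + f b) / 2 * (∫ t in a..b, g t) + (∫ t in a..b, f t * g t) := by
  have hfc : ContinuousOn f (Icc a b) := fun x hx => (hf' x hx).continuousWithinAt
  set u : ℝ → ℝ := fun t => f t + M / 2 * ((t - a) * (b - t))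
  have hu : ConcaveOn ℝ (Icc a b) u :=
    concaveOn_add_mul_sub_mul_sub (convex_Icc a b) hfc
      (fun x hx => (hf' x (interior_subset hx)).mono interior_subset)
      (fun x hx => (hf'' x (interior_subset hx)).mono interior_subset)
      (fun x hx => hM x (interior_subset hx)) a b
  have hends : (u a + u b) / 2 = (f a + f b) / 2 := by simp [u]
  obtain ⟨hlow, hup⟩ := hu.integral_sub_endpoint_mean_mul_mem_Icc hab.le
    (hfc.add (by fun_prop)) hg hg01 hgsymm
  rw [hends] at hlow hup
  have hmiddle : M / 2 * (∫ t in a..b, (t - a) * (b - t) * g t)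
      - (f a + f b) / 2 * (∫ t in a..b, g t) + (∫ t in a..b, f t * g t)
      = ∫ t in a..b, (u t - (f a + f b) / 2) * g t := by
    have hqgi : IntervalIntegrable (fun t => (t - a) * (b - t) * g t) volume a b :=
      hg.continuousOn_mul (by fun_prop)
    have hfgi : IntervalIntegrable (fun t => f t * g t) volume a b :=
      hg.continuousOn_mul (uIcc_of_le hab.le ▸ hfc)
    rw [← intervalIntegral.integral_const_mul, ← intervalIntegral.integral_const_mul,
      ← intervalIntegral.integral_sub (hqgi.const_mul _) (hg.const_mul _),
      ← intervalIntegral.integral_add ((hqgi.const_mul _).sub (hg.const_mul _)) hfgi]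
    congr 1; ext t; ring
  have hright : (b - a) * (M * (b - a) ^ 2 / 12 - (f a + f b) / 2
      + (1 / (b - a)) * (∫ t in a..b, f t)) = ∫ t in a..b, (u t - (f a + f b) / 2) := by
    have hfi : IntervalIntegrable f volume a b := hfc.intervalIntegrable_of_Icc hab.le
    have hqi : IntervalIntegrable (fun t => (t - a) * (b - t)) volume a b :=
      (by fun_prop : Continuous fun t : ℝ => (t - a) * (b - t)).intervalIntegrable a b
    rw [intervalIntegral.integral_sub (hfi.add (hqi.const_mul _)) intervalIntegrable_const,
      intervalIntegral.integral_add hfi (hqi.const_mul _), intervalIntegral.integral_const_mul,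
      integral_sub_mul_sub, intervalIntegral.integral_const, smul_eq_mul]
    field_simp [sub_ne_zero.2 hab.ne']
    ring
  rw [hmiddle, hright]
  exact ⟨hup, hlow⟩
end

section
/- Let a < b be real numbers and let f : [a,b] → ℝ be continuous and convex. Then for every x ∈ (a,b), (f(a)+f(b))/2 − (1/(b−a))·∫_a^b f(t) dt ≥ ((x−a)/(b−a))·( (f(a)+f(x))/2 − (1/(x−a))·∫_a^x f(t) dt ) ≥ 0. -/
open MeasureTheory intervalIntegral Set

/-!
A convex function lies below its chords, so integrating the chord bound over `[c, d]` gives the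
trapezoid inequality `∫_c^d f ≤ (d - c) (f c + f d) / 2`; on `[a, x]` this is the nonnegativity.
Splitting `∫_a^b f` at `x`, the other inequality reduces to the trapezoid inequality on `[x, b]`
together with the chord bound `(b - a) f x ≤ (b - x) f a + (x - a) f b`.
-/

theorem ConvexOn.mul_le_chord {f : ℝ → ℝ} {c d t : ℝ} (hf : ConvexOn ℝ (Icc c d) f)
    (ht : t ∈ Icc c d) : (d - c) * f t ≤ (d - t) * f c + (t - c) * f d := by
  have hcd : c ≤ d := ht.1.trans ht.2
  rcases ht.1.eq_or_lt with rfl | hct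
  · linarith
  rcases ht.2.eq_or_lt with rfl | htd
  · linarith
  exact hf.secant_mono_aux1 (left_mem_Icc.2 hcd) (right_mem_Icc.2 hcd) hct htd

theorem integral_chord (u v c d : ℝ) :
    ∫ t in c..d, ((d - t) * u + (t - c) * v) = (d - c) ^ 2 * (u + v) / 2 := by
  have hu : Continuous fun t : ℝ => (d - t) * u := by fun_prop
  have hv : Continuous fun t : ℝ => (t - c) * v := by fun_prop
  rw [intervalIntegral.integral_add (hu.intervalIntegrable _ _) (hv.intervalIntegrable _ _)]
  simp only [intervalIntegral.integral_mul_const, integral_comp_sub_left fun t => t,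
    integral_comp_sub_right fun t => t, integral_id]
  ring

theorem ConvexOn.integral_le_trapezoid {f : ℝ → ℝ} {c d : ℝ} (hcd : c ≤ d)
    (hf : ConvexOn ℝ (Icc c d) f) (hfi : IntervalIntegrable f volume c d) :
    ∫ t in c..d, f t ≤ (d - c) * (f c + f d) / 2 := by
  rcases hcd.eq_or_lt with rfl | hcd
  · simp
  have hchord : Continuous fun t => (d - t) * f c + (t - c) * f d := by fun_prop
  have hmono : (d - c) * ∫ t in c..d, f t ≤ ∫ t in c..d, ((d - t) * f c + (t - c) * f d) := by
    rw [← intervalIntegral.integral_const_mul]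
    exact integral_mono_on hcd.le (hfi.const_mul _) (hchord.intervalIntegrable _ _)
      fun t ht => hf.mul_le_chord ht
  rw [integral_chord] at hmono
  have : 0 < d - c := sub_pos.2 hcd
  nlinarith

theorem fejer_stmt_10_general (a b : ℝ) (f : ℝ → ℝ)
    (hf_cont : ContinuousOn f (Set.Icc a b))
    (hf_conv : ConvexOn ℝ (Set.Icc a b) f)
    (x : ℝ) (hx : x ∈ Set.Ioo a b) :
    (x - a) / (b - a) * ((f a + f x) / 2 - (1 / (x - a)) * (∫ t in a..x, f t))
        ≤ (f a + f b) / 2 - (1 / (b - a)) * (∫ t in a..b, f t) ∧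
    0 ≤ (x - a) / (b - a) * ((f a + f x) / 2 - (1 / (x - a)) * (∫ t in a..x, f t)) := by
  obtain ⟨hax, hxb⟩ := hx
  have hint : ∀ {c d}, a ≤ c → c ≤ d → d ≤ b → IntervalIntegrable f volume c d :=
    fun hc hcd hd => (hf_cont.mono (uIcc_of_le hcd ▸ Icc_subset_Icc hc hd)).intervalIntegrable
  have hconv : ∀ {c d}, a ≤ c → d ≤ b → ConvexOn ℝ (Icc c d) f :=
    fun hc hd => hf_conv.subset (Icc_subset_Icc hc hd) (convex_Icc _ _)
  have hleft := (hconv le_rfl hxb.le).integral_le_trapezoid hax.le (hint le_rfl hax.le hxb.le)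
  have hright := (hconv hax.le le_rfl).integral_le_trapezoid hxb.le (hint hax.le hxb.le le_rfl)
  have hchord := hf_conv.mul_le_chord ⟨hax.le, hxb.le⟩
  rw [← integral_add_adjacent_intervals (hint le_rfl hax.le hxb.le) (hint hax.le hxb.le le_rfl)]
  have hxa : 0 < x - a := sub_pos.2 hax
  have hba : 0 < b - a := by linarith
  constructor
  · rw [← sub_nonneg]
    field_simp
    nlinarith
  · field_simp
    nlinarith

/-- Corollary (c_1): for `f` continuous and convex on `[a,b]`, for all `x ∈ (a,b)`:
`(f(a)+f(b))/2 − (1/(b−a))∫_a^b f ≥ ((x−a)/(b−a))·((f(a)+f(x))/2 − (1/(x−a))∫_a^x f) ≥ 0`. -/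
theorem fejer_stmt_10 (a b : ℝ) (hab : a < b) (f : ℝ → ℝ)
    (hf_cont : ContinuousOn f (Set.Icc a b))
    (hf_conv : ConvexOn ℝ (Set.Icc a b) f)
    (x : ℝ) (hx : x ∈ Set.Ioo a b) :
    (x - a) / (b - a) * ((f a + f x) / 2 - (1 / (x - a)) * (∫ t in a..x, f t))
        ≤ (f a + f b) / 2 - (1 / (b - a)) * (∫ t in a..b, f t) ∧
    0 ≤ (x - a) / (b - a) * ((f a + f x) / 2 - (1 / (x - a)) * (∫ t in a..x, f t)) :=
  fejer_stmt_10_general a b f hf_cont hf_conv x hx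
end

section
/- Let a < b be real numbers and let f : [a,b] → ℝ be continuous and convex. Then for every x ∈ (a,b), (1/(b−a))·∫_a^b f(t) dt − f((a+b)/2) ≥ ((x−a)/(b−a))·( (1/(x−a))·∫_a^x f(t) dt − f((a+x)/2) ) ≥ 0. -/
/-!
Write `G(c, d) = ∫_c^d f - (d - c) f((c + d)/2)` for the Hermite–Hadamard gap. The claim reads
`0 ≤ G(a, x) / (b - a) ≤ G(a, b) / (b - a)`. The left Hermite–Hadamard inequality, obtained by
averaging `f t + f (c + d - t) ≥ 2 f((c + d)/2)`, says `G ≥ 0`. Since `(a + b)/2` is a convex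
combination of `(a + x)/2` and `(x + b)/2` with weights `(x - a)/(b - a)` and `(b - x)/(b - a)`,
the gap is superadditive: `G(a, x) + G(x, b) ≤ G(a, b)`.
-/

open MeasureTheory intervalIntegral

noncomputable def hermiteHadamardGap (f : ℝ → ℝ) (c d : ℝ) : ℝ :=
  (∫ t in c..d, f t) - (d - c) * f ((c + d) / 2)

section

variable {f : ℝ → ℝ}

theorem ConvexOn.two_mul_midpoint_le_add_reflect {c d t : ℝ} (hf : ConvexOn ℝ (Set.Icc c d) f)
    (ht : t ∈ Set.Icc c d) : 2 * f ((c + d) / 2) ≤ f t + f (c + d - t) := by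
  have ht' : c + d - t ∈ Set.Icc c d := ⟨by linarith [ht.2], by linarith [ht.1]⟩
  have h := hf.2 ht ht' (by norm_num : (0 : ℝ) ≤ 1 / 2) (by norm_num : (0 : ℝ) ≤ 1 / 2)
    (by norm_num)
  have hmid : (1 / 2 : ℝ) • t + (1 / 2 : ℝ) • (c + d - t) = (c + d) / 2 := by
    simp only [smul_eq_mul]; ring
  rw [hmid, smul_eq_mul, smul_eq_mul] at h
  linarith

theorem hermiteHadamardGap_nonneg {c d : ℝ} (hcd : c ≤ d) (hf_cont : ContinuousOn f (Set.Icc c d))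
    (hf_conv : ConvexOn ℝ (Set.Icc c d) f) : 0 ≤ hermiteHadamardGap f c d := by
  have hint : IntervalIntegrable f volume c d := hf_cont.intervalIntegrable_of_Icc hcd
  have hint_reflect : IntervalIntegrable (fun t => f (c + d - t)) volume c d := by
    simpa using (hint.comp_sub_left (c + d)).symm
  have hreflect : (∫ t in c..d, f (c + d - t)) = ∫ t in c..d, f t := by
    simp [integral_comp_sub_left f (c + d)]
  have hmono : (∫ _ in c..d, 2 * f ((c + d) / 2)) ≤ ∫ t in c..d, (f t + f (c + d - t)) :=
    integral_mono_on hcd intervalIntegrable_const (hint.add hint_reflect)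
      fun t ht => hf_conv.two_mul_midpoint_le_add_reflect ht
  rw [intervalIntegral.integral_const, integral_add hint hint_reflect, hreflect, smul_eq_mul] at hmono
  unfold hermiteHadamardGap
  linarith

theorem ConvexOn.sub_mul_midpoint_le {a b x : ℝ} (hab : a < b) (hx : x ∈ Set.Icc a b)
    (hf : ConvexOn ℝ (Set.Icc a b) f) :
    (b - a) * f ((a + b) / 2) ≤ (x - a) * f ((a + x) / 2) + (b - x) * f ((x + b) / 2) := by
  have hba : b - a ≠ 0 := sub_ne_zero.2 hab.ne'
  have h := hf.2 (x := (a + x) / 2) (y := (x + b) / 2)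
    ⟨by linarith [hx.1], by linarith [hx.2]⟩ ⟨by linarith [hx.1], by linarith [hx.2]⟩
    (div_nonneg (sub_nonneg.2 hx.1) (sub_nonneg.2 hab.le))
    (div_nonneg (sub_nonneg.2 hx.2) (sub_nonneg.2 hab.le))
    (by field_simp; ring)
  have hmid : ((x - a) / (b - a)) • ((a + x) / 2) + ((b - x) / (b - a)) • ((x + b) / 2)
      = (a + b) / 2 := by
    simp only [smul_eq_mul]; field_simp; ring
  rw [hmid, smul_eq_mul, smul_eq_mul] at h
  calc (b - a) * f ((a + b) / 2)
      ≤ (b - a) * ((x - a) / (b - a) * f ((a + x) / 2) + (b - x) / (b - a) * f ((x + b) / 2)) :=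
        mul_le_mul_of_nonneg_left h (sub_nonneg.2 hab.le)
    _ = (x - a) * f ((a + x) / 2) + (b - x) * f ((x + b) / 2) := by field_simp

theorem hermiteHadamardGap_add_le {a b x : ℝ} (hab : a < b) (hx : x ∈ Set.Icc a b)
    (hf_cont : ContinuousOn f (Set.Icc a b)) (hf_conv : ConvexOn ℝ (Set.Icc a b) f) :
    hermiteHadamardGap f a x + hermiteHadamardGap f x b ≤ hermiteHadamardGap f a b := by
  have hsplit : (∫ t in a..x, f t) + (∫ t in x..b, f t) = ∫ t in a..b, f t :=
    integral_add_adjacent_intervals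
      ((hf_cont.mono (Set.Icc_subset_Icc_right hx.2)).intervalIntegrable_of_Icc hx.1)
      ((hf_cont.mono (Set.Icc_subset_Icc_left hx.1)).intervalIntegrable_of_Icc hx.2)
  unfold hermiteHadamardGap
  linarith [hf_conv.sub_mul_midpoint_le hab hx]

end

/-- Corollary (c_2): for `f` continuous and convex on `[a,b]`, for all `x ∈ (a,b)`:
`(1/(b−a))∫_a^b f − f((a+b)/2) ≥ ((x−a)/(b−a))·((1/(x−a))∫_a^x f − f((a+x)/2)) ≥ 0`. -/
theorem fejer_stmt_11 (a b : ℝ) (hab : a < b) (f : ℝ → ℝ)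
    (hf_cont : ContinuousOn f (Set.Icc a b))
    (hf_conv : ConvexOn ℝ (Set.Icc a b) f)
    (x : ℝ) (hx : x ∈ Set.Ioo a b) :
    (x - a) / (b - a) * ((1 / (x - a)) * (∫ t in a..x, f t) - f ((a + x) / 2))
        ≤ (1 / (b - a)) * (∫ t in a..b, f t) - f ((a + b) / 2) ∧
    0 ≤ (x - a) / (b - a) * ((1 / (x - a)) * (∫ t in a..x, f t) - f ((a + x) / 2)) := by
  have hxa : x - a ≠ 0 := sub_ne_zero.2 hx.1.ne'
  have hba : 0 < b - a := sub_pos.2 hab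
  have hleft : (x - a) / (b - a) * ((1 / (x - a)) * (∫ t in a..x, f t) - f ((a + x) / 2))
      = hermiteHadamardGap f a x / (b - a) := by
    unfold hermiteHadamardGap; field_simp
  have hright : (1 / (b - a)) * (∫ t in a..b, f t) - f ((a + b) / 2)
      = hermiteHadamardGap f a b / (b - a) := by
    unfold hermiteHadamardGap; field_simp
  have hsub_left : Set.Icc a x ⊆ Set.Icc a b := Set.Icc_subset_Icc_right hx.2.le
  have hsub_right : Set.Icc x b ⊆ Set.Icc a b := Set.Icc_subset_Icc_left hx.1.le
  have hgap_left := hermiteHadamardGap_nonneg hx.1.le (hf_cont.mono hsub_left)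
    (hf_conv.subset hsub_left (convex_Icc a x))
  have hgap_right := hermiteHadamardGap_nonneg hx.2.le (hf_cont.mono hsub_right)
    (hf_conv.subset hsub_right (convex_Icc x b))
  have hgap_add := hermiteHadamardGap_add_le hab (Set.Ioo_subset_Icc_self hx) hf_cont hf_conv
  rw [hleft, hright]
  exact ⟨div_le_div_of_nonneg_right (by linarith) hba.le, div_nonneg hgap_left hba.le⟩
end

section
/- Let a < b be real numbers and let f : [a,b] → ℝ be twice differentiable with a real constant m such that m ≤ f''(x) for all x ∈ [a,b]. Then for every x ∈ (a,b), (1/(b−a))·∫_a^b f(t) dt − f((a+b)/2) − m(b−a)²/24 ≥ ((x−a)/(b−a))·( (1/(x−a))·∫_a^x f(t) dt − f((a+x)/2) − m(x−a)²/24 ) ≥ 0. -/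
/-! With `g t = f t - m t² / 2`, convex because `g'' = f'' - m ≥ 0`, both sides of the claim
are midpoint-rule errors of `g` on `[a, ·]` divided by `b - a`: the midpoint rule errs by exactly
`m (d - c)³ / 24` on the quadratic `m t² / 2`. For a convex function the midpoint-rule error is
nonnegative (Hermite–Hadamard) and superadditive over adjacent intervals (convexity at the two
midpoints), which gives both inequalities. -/

open MeasureTheory intervalIntegral Set

theorem convexOn_sub_mul_sq_of_le_deriv2 {D : Set ℝ} (hD : Convex ℝ D) {f f' f'' : ℝ → ℝ}
    {m : ℝ} (hf' : ∀ x ∈ D, HasDerivWithinAt f (f' x) D x)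
    (hf'' : ∀ x ∈ D, HasDerivWithinAt f' (f'' x) D x) (hm : ∀ x ∈ D, m ≤ f'' x) :
    ConvexOn ℝ D (fun t ↦ f t - m * t ^ 2 / 2) := by
  have hq' (t : ℝ) : HasDerivAt (fun t ↦ m * t ^ 2 / 2) (m * t) t := by
    refine (((hasDerivAt_pow 2 t).const_mul m).div_const 2).congr_deriv ?_
    norm_num
    ring
  have hq'' (t : ℝ) : HasDerivAt (fun t ↦ m * t) m t := by
    simpa using (hasDerivAt_id t).const_mul m
  refine convexOn_of_hasDerivWithinAt2_nonneg hD (f' := fun t ↦ f' t - m * t)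
    (f'' := fun t ↦ f'' t - m) ?_ ?_ ?_ ?_
  · exact fun t ht ↦ ((hf' t ht).sub (hq' t).hasDerivWithinAt).continuousWithinAt
  · exact fun t ht ↦
      ((hf' t (interior_subset ht)).sub (hq' t).hasDerivWithinAt).mono interior_subset
  · exact fun t ht ↦
      ((hf'' t (interior_subset ht)).sub (hq'' t).hasDerivWithinAt).mono interior_subset
  · exact fun t ht ↦ sub_nonneg.2 (hm t (interior_subset ht))

noncomputable def midpointError (g : ℝ → ℝ) (c d : ℝ) : ℝ :=
  (∫ t in c..d, g t) - (d - c) * g ((c + d) / 2)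

theorem ConvexOn.mul_map_midpoint_le_intervalIntegral {g : ℝ → ℝ} {c d : ℝ} (hcd : c ≤ d)
    (hg : ConvexOn ℝ (Icc c d) g) (hgc : ContinuousOn g (Icc c d)) :
    (d - c) * g ((c + d) / 2) ≤ ∫ t in c..d, g t := by
  have hrefl_maps : MapsTo (fun t ↦ c + d - t) (Icc c d) (Icc c d) :=
    fun t ht ↦ ⟨by linarith [ht.2], by linarith [ht.1]⟩
  have hint : IntervalIntegrable g volume c d := hgc.intervalIntegrable_of_Icc hcd
  have hint_refl : IntervalIntegrable (fun t ↦ g (c + d - t)) volume c d :=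
    (hgc.comp (by fun_prop) hrefl_maps).intervalIntegrable_of_Icc hcd
  -- pair each `t` with its reflection `c + d - t`
  have hmid : ∀ t ∈ Icc c d, 2 * g ((c + d) / 2) ≤ g t + g (c + d - t) := by
    intro t ht
    have h := hg.2 ht (hrefl_maps ht) (by norm_num : (0 : ℝ) ≤ 1 / 2)
      (by norm_num : (0 : ℝ) ≤ 1 / 2) (by norm_num)
    have hpt : (1 / 2 : ℝ) * t + 1 / 2 * (c + d - t) = (c + d) / 2 := by ring
    rw [smul_eq_mul, smul_eq_mul, smul_eq_mul, smul_eq_mul, hpt] at h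
    linarith
  have hsym : ∫ t in c..d, g (c + d - t) = ∫ t in c..d, g t := by
    simp [intervalIntegral.integral_comp_sub_left g (c + d)]
  have := intervalIntegral.integral_mono_on hcd intervalIntegrable_const (hint.add hint_refl) hmid
  rw [intervalIntegral.integral_const, intervalIntegral.integral_add hint hint_refl, hsym,
    smul_eq_mul] at this
  linarith

theorem ConvexOn.midpointError_nonneg {g : ℝ → ℝ} {c d : ℝ} (hcd : c ≤ d)
    (hg : ConvexOn ℝ (Icc c d) g) (hgc : ContinuousOn g (Icc c d)) :
    0 ≤ midpointError g c d :=
  sub_nonneg.2 (hg.mul_map_midpoint_le_intervalIntegral hcd hgc)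

theorem ConvexOn.midpointError_add_le {g : ℝ → ℝ} {a x b : ℝ} (hax : a ≤ x)
    (hxb : x ≤ b) (hg : ConvexOn ℝ (Icc a b) g) (hgc : ContinuousOn g (Icc a b)) :
    midpointError g a x + midpointError g x b ≤ midpointError g a b := by
  rcases (hax.trans hxb).eq_or_lt with rfl | hab
  · obtain rfl : x = a := le_antisymm hxb hax
    simp [midpointError]
  have hmid :
      (b - a) * g ((a + b) / 2) ≤ (x - a) * g ((a + x) / 2) + (b - x) * g ((x + b) / 2) := by
    have hba : 0 < b - a := sub_pos.2 hab
    have h := hg.2 (x := (a + x) / 2) (y := (x + b) / 2) ⟨by linarith, by linarith⟩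
      ⟨by linarith, by linarith⟩ (div_nonneg (sub_nonneg.2 hax) hba.le)
      (div_nonneg (sub_nonneg.2 hxb) hba.le) (by field_simp; ring)
    have hpt : (x - a) / (b - a) * ((a + x) / 2) + (b - x) / (b - a) * ((x + b) / 2)
        = (a + b) / 2 := by
      field_simp; ring
    rw [smul_eq_mul, smul_eq_mul, smul_eq_mul, smul_eq_mul, hpt] at h
    calc (b - a) * g ((a + b) / 2)
        ≤ (b - a) * ((x - a) / (b - a) * g ((a + x) / 2) + (b - x) / (b - a) * g ((x + b) / 2)) :=
          mul_le_mul_of_nonneg_left h hba.le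
      _ = (x - a) * g ((a + x) / 2) + (b - x) * g ((x + b) / 2) := by field_simp
  have hsplit : (∫ t in a..x, g t) + (∫ t in x..b, g t) = ∫ t in a..b, g t :=
    intervalIntegral.integral_add_adjacent_intervals
      ((hgc.mono (Icc_subset_Icc le_rfl hxb)).intervalIntegrable_of_Icc hax)
      ((hgc.mono (Icc_subset_Icc hax le_rfl)).intervalIntegrable_of_Icc hxb)
  simp only [midpointError]
  linarith

theorem midpointError_sub_mul_sq {f : ℝ → ℝ} {c d : ℝ} (hf : IntervalIntegrable f volume c d)
    (m : ℝ) :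
    midpointError (fun t ↦ f t - m * t ^ 2 / 2) c d
      = midpointError f c d - m * (d - c) ^ 3 / 24 := by
  have hq : IntervalIntegrable (fun t : ℝ ↦ m * t ^ 2 / 2) volume c d := by
    apply Continuous.intervalIntegrable; fun_prop
  simp only [midpointError]
  rw [intervalIntegral.integral_sub hf hq, intervalIntegral.integral_div,
    intervalIntegral.integral_const_mul, integral_pow]
  ring

/-- Remark (improvement of (cpn_1), lower part): for twice differentiable `f` with
`m ≤ f''` on `[a,b]`, for all `x ∈ (a,b)`:
`(1/(b−a))∫_a^b f − f((a+b)/2) − m(b−a)²/24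
  ≥ ((x−a)/(b−a))·((1/(x−a))∫_a^x f − f((a+x)/2) − m(x−a)²/24) ≥ 0`. -/
theorem fejer_stmt_12 (a b : ℝ) (hab : a < b) (f f' f'' : ℝ → ℝ) (m : ℝ)
    (hf' : ∀ x ∈ Set.Icc a b, HasDerivWithinAt f (f' x) (Set.Icc a b) x)
    (hf'' : ∀ x ∈ Set.Icc a b, HasDerivWithinAt f' (f'' x) (Set.Icc a b) x)
    (hm : ∀ x ∈ Set.Icc a b, m ≤ f'' x)
    (x : ℝ) (hx : x ∈ Set.Ioo a b) :
    (x - a) / (b - a) * ((1 / (x - a)) * (∫ t in a..x, f t) - f ((a + x) / 2)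
          - m * (x - a) ^ 2 / 24)
        ≤ (1 / (b - a)) * (∫ t in a..b, f t) - f ((a + b) / 2) - m * (b - a) ^ 2 / 24 ∧
    0 ≤ (x - a) / (b - a) * ((1 / (x - a)) * (∫ t in a..x, f t) - f ((a + x) / 2)
          - m * (x - a) ^ 2 / 24) := by
  obtain ⟨hax, hxb⟩ := hx
  set g := fun t ↦ f t - m * t ^ 2 / 2
  have hgconv : ConvexOn ℝ (Icc a b) g :=
    convexOn_sub_mul_sq_of_le_deriv2 (convex_Icc a b) hf' hf'' hm
  have hfc : ContinuousOn f (Icc a b) := fun t ht ↦ (hf' t ht).continuousWithinAt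
  have hgc : ContinuousOn g (Icc a b) := hfc.sub (by fun_prop)
  have hnormalize : ∀ c ∈ Ioc a b, (1 / (c - a)) * (∫ t in a..c, f t) - f ((a + c) / 2)
      - m * (c - a) ^ 2 / 24 = midpointError g a c / (c - a) := by
    rintro c ⟨hac, hcb⟩
    rw [midpointError_sub_mul_sq ((hfc.mono (Icc_subset_Icc le_rfl hcb)).intervalIntegrable_of_Icc
      hac.le), midpointError]
    field_simp [(sub_pos.2 hac).ne']
  have hsuper := hgconv.midpointError_add_le hax.le hxb.le hgc
  have hax_nonneg : 0 ≤ midpointError g a x :=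
    (hgconv.subset (Icc_subset_Icc le_rfl hxb.le) (convex_Icc a x)).midpointError_nonneg
      hax.le (hgc.mono (Icc_subset_Icc le_rfl hxb.le))
  have hxb_nonneg : 0 ≤ midpointError g x b :=
    (hgconv.subset (Icc_subset_Icc hax.le le_rfl) (convex_Icc x b)).midpointError_nonneg
      hxb.le (hgc.mono (Icc_subset_Icc hax.le le_rfl))
  have hscale : (x - a) / (b - a) * (midpointError g a x / (x - a))
      = midpointError g a x / (b - a) := by
    field_simp [(sub_pos.2 hax).ne']
  rw [hnormalize x ⟨hax, hxb.le⟩, hnormalize b ⟨hab, le_rfl⟩, hscale]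
  exact ⟨div_le_div_of_nonneg_right (by linarith) (sub_pos.2 hab).le,
    div_nonneg hax_nonneg (sub_pos.2 hab).le⟩
end

section
/- Let p, q > 0 be real numbers, let a₁ ≤ a < b ≤ b₁ be real numbers, and set A = (pa+qb)/(p+q). Let g : [a,b] → ℝ be integrable, nonnegative, and symmetric about A (i.e. g(x) = g(2A−x) whenever both points lie in [a,b]), and let f : [a₁,b₁] → ℝ be continuous and convex. If 0 < y ≤ ((b−a)/(p+q))·min{p,q}, then f((pa+qb)/(p+q))·∫_{A−y}^{A+y} g(t) dt ≤ ∫_{A−y}^{A+y} f(x)g(x) dx ≤ ((p·f(a)+q·f(b))/(p+q))·∫_{A−y}^{A+y} g(t) dt. -/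
/-!
Split `[A - y, A + y]` at `A` and reflect the left half by `x ↦ 2A - x`; since `g` is symmetric
about `A`, both `∫ f g` and `∫ g` become integrals over `[A, A + y]` against `g`, of
`f(x) + f(2A - x)` and of `2` respectively. It therefore suffices to bound `f(x) + f(2A - x)`
pointwise. Convexity at the midpoint `A` gives the lower bound `2 f(A)`. Above, `f` lies below its
chord over `[a, b]`, and the chord is affine, so `f(x) + f(2A - x)` is at most twice the chord's
value at `A = (pa + qb)/(p + q)`, which is `(p f(a) + q f(b))/(p + q)`.
-/

open MeasureTheory intervalIntegral Set

namespace intervalIntegral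

variable {c y : ℝ}

theorem integral_symm_eq_integral_add_reflect {h : ℝ → ℝ}
    (hh : IntervalIntegrable h volume (c - y) (c + y)) :
    ∫ x in (c - y)..(c + y), h x = ∫ x in c..(c + y), (h x + h (2 * c - x)) := by
  have hc : c ∈ uIcc (c - y) (c + y) := by
    rw [mem_uIcc]
    rcases le_total 0 y with hy | hy
    · exact .inl ⟨by linarith, by linarith⟩
    · exact .inr ⟨by linarith, by linarith⟩
  have hL : IntervalIntegrable h volume (c - y) c := hh.mono_set (uIcc_subset_uIcc_left hc)
  have hR : IntervalIntegrable h volume c (c + y) := hh.mono_set (uIcc_subset_uIcc_right hc)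
  have hL' : IntervalIntegrable (fun x => h (2 * c - x)) volume c (c + y) := by
    simpa only [show 2 * c - (c - y) = c + y by ring, show 2 * c - c = c by ring]
      using (hL.comp_sub_left (2 * c)).symm
  have reflect : ∫ x in (c - y)..c, h x = ∫ x in c..(c + y), h (2 * c - x) := by
    rw [integral_comp_sub_left]; congr 1 <;> ring
  rw [← integral_add_adjacent_intervals hL hR, reflect, integral_add hR hL', add_comm]

theorem integral_mul_mono_of_symm {f₁ f₂ g : ℝ → ℝ} (hy : 0 ≤ y)
    (hf₁g : IntervalIntegrable (fun x => f₁ x * g x) volume (c - y) (c + y))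
    (hf₂g : IntervalIntegrable (fun x => f₂ x * g x) volume (c - y) (c + y))
    (hg : ∀ x ∈ Icc c (c + y), 0 ≤ g x)
    (hg_symm : ∀ x ∈ Icc c (c + y), g (2 * c - x) = g x)
    (hf : ∀ x ∈ Icc c (c + y), f₁ x + f₁ (2 * c - x) ≤ f₂ x + f₂ (2 * c - x)) :
    ∫ x in (c - y)..(c + y), f₁ x * g x ≤ ∫ x in (c - y)..(c + y), f₂ x * g x := by
  rw [← sub_nonneg, ← integral_sub hf₂g hf₁g,
    integral_symm_eq_integral_add_reflect (hf₂g.sub hf₁g)]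
  refine integral_nonneg (by linarith) fun x hx => ?_
  have := mul_nonneg (sub_nonneg.2 (hf x hx)) (hg x hx)
  simp only [hg_symm x hx]
  linarith

end intervalIntegral

namespace ConvexOn

variable {s : Set ℝ} {f : ℝ → ℝ}

theorem two_mul_le_add_reflect (hf : ConvexOn ℝ s f) {c x : ℝ} (hx : x ∈ s)
    (hx' : 2 * c - x ∈ s) : 2 * f c ≤ f x + f (2 * c - x) := by
  have h := hf.2 hx hx' (by norm_num : (0 : ℝ) ≤ 1 / 2) (by norm_num : (0 : ℝ) ≤ 1 / 2)
    (by norm_num)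
  simp only [smul_eq_mul, show 1 / 2 * x + 1 / 2 * (2 * c - x) = c by ring] at h
  linarith

theorem le_chord (hf : ConvexOn ℝ s f) {a b x : ℝ} (ha : a ∈ s) (hb : b ∈ s) (hab : a < b)
    (hx : x ∈ Icc a b) : f x ≤ ((b - x) * f a + (x - a) * f b) / (b - a) := by
  have hba : 0 < b - a := sub_pos.2 hab
  have h := hf.2 ha hb (div_nonneg (sub_nonneg.2 hx.2) hba.le)
    (div_nonneg (sub_nonneg.2 hx.1) hba.le) (by field_simp; ring)
  simp only [smul_eq_mul] at h
  rw [show (b - x) / (b - a) * a + (x - a) / (b - a) * b = x by field_simp; ring] at h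
  calc f x ≤ (b - x) / (b - a) * f a + (x - a) / (b - a) * f b := h
    _ = ((b - x) * f a + (x - a) * f b) / (b - a) := by ring

theorem add_reflect_le_weighted_mean (hf : ConvexOn ℝ s f) {p q a b c x : ℝ} (hpq : p + q ≠ 0)
    (hc : c = (p * a + q * b) / (p + q)) (ha : a ∈ s) (hb : b ∈ s) (hab : a < b)
    (hx : x ∈ Icc a b) (hx' : 2 * c - x ∈ Icc a b) :
    f x + f (2 * c - x) ≤ 2 * ((p * f a + q * f b) / (p + q)) := by
  have hba : b - a ≠ 0 := sub_ne_zero.2 hab.ne'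
  have chord_sum : ((b - x) * f a + (x - a) * f b) / (b - a)
      + ((b - (2 * c - x)) * f a + ((2 * c - x) - a) * f b) / (b - a)
      = 2 * ((p * f a + q * f b) / (p + q)) := by
    subst hc; field_simp; ring
  linarith [hf.le_chord ha hb hab hx, hf.le_chord ha hb hab hx']

end ConvexOn

theorem Icc_sub_add_subset_Icc_of_le_mul_min {p q a b y : ℝ} (hp : 0 < p) (hq : 0 < q)
    (hab : a ≤ b) (hy : y ≤ (b - a) / (p + q) * min p q) :
    Icc ((p * a + q * b) / (p + q) - y) ((p * a + q * b) / (p + q) + y) ⊆ Icc a b := by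
  have hpq : 0 < p + q := add_pos hp hq
  have hw : 0 ≤ (b - a) / (p + q) := div_nonneg (sub_nonneg.2 hab) hpq.le
  have hyp := hy.trans (mul_le_mul_of_nonneg_left (min_le_left p q) hw)
  have hyq := hy.trans (mul_le_mul_of_nonneg_left (min_le_right p q) hw)
  have hleft : (p * a + q * b) / (p + q) - a = (b - a) / (p + q) * q := by field_simp; ring
  have hright : b - (p * a + q * b) / (p + q) = (b - a) / (p + q) * p := by field_simp; ring
  exact Icc_subset_Icc (by linarith) (by linarith)

/-- Proposition (weighted Vasić–Lacković / Lupaş statement, the "if" direction):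
with `p, q > 0`, `a₁ ≤ a < b ≤ b₁`, `A = (pa+qb)/(p+q)`, `g : [a,b] → ℝ₊` integrable and
symmetric about `A`, `f : [a₁,b₁] → ℝ` continuous and convex, and
`0 < y ≤ ((b−a)/(p+q))·min{p,q}`, then
`f(A)·∫_{A−y}^{A+y} g ≤ ∫_{A−y}^{A+y} f·g ≤ ((p·f(a)+q·f(b))/(p+q))·∫_{A−y}^{A+y} g`. -/
theorem fejer_stmt_14 (p q a₁ a b b₁ A y : ℝ) (f g : ℝ → ℝ)
    (hp : 0 < p) (hq : 0 < q)
    (ha₁ : a₁ ≤ a) (hab : a < b) (hb₁ : b ≤ b₁)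
    (hA : A = (p * a + q * b) / (p + q))
    (hg : IntervalIntegrable g volume a b)
    (hg0 : ∀ x ∈ Set.Icc a b, 0 ≤ g x)
    (hgsymm : ∀ x, x ∈ Set.Icc a b → 2 * A - x ∈ Set.Icc a b → g x = g (2 * A - x))
    (hf_cont : ContinuousOn f (Set.Icc a₁ b₁))
    (hf_conv : ConvexOn ℝ (Set.Icc a₁ b₁) f)
    (hy0 : 0 < y) (hy : y ≤ (b - a) / (p + q) * min p q) :
    f ((p * a + q * b) / (p + q)) * (∫ t in (A - y)..(A + y), g t)
        ≤ (∫ x in (A - y)..(A + y), f x * g x) ∧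
    (∫ x in (A - y)..(A + y), f x * g x)
        ≤ (p * f a + q * f b) / (p + q) * (∫ t in (A - y)..(A + y), g t) := by
  have hsub : Icc (A - y) (A + y) ⊆ Icc a b :=
    hA ▸ Icc_sub_add_subset_Icc_of_le_mul_min hp hq hab.le hy
  have hab₁ : Icc a b ⊆ Icc a₁ b₁ := Icc_subset_Icc ha₁ hb₁
  have hA_le : A - y ≤ A + y := by linarith
  have hgy : IntervalIntegrable g volume (A - y) (A + y) :=
    hg.mono_set (by rwa [uIcc_of_le hA_le, uIcc_of_le hab.le])
  have hfgy : IntervalIntegrable (fun x => f x * g x) volume (A - y) (A + y) :=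
    hgy.continuousOn_mul (hf_cont.mono (by rw [uIcc_of_le hA_le]; exact hsub.trans hab₁))
  have hmem : ∀ x ∈ Icc A (A + y), x ∈ Icc a b ∧ 2 * A - x ∈ Icc a b := fun x hx =>
    ⟨hsub ⟨by linarith [hx.1], hx.2⟩, hsub ⟨by linarith [hx.2], by linarith [hx.1]⟩⟩
  have hg_nonneg : ∀ x ∈ Icc A (A + y), 0 ≤ g x := fun x hx => hg0 x (hmem x hx).1
  have hg_symm : ∀ x ∈ Icc A (A + y), g (2 * A - x) = g x := fun x hx =>
    (hgsymm x (hmem x hx).1 (hmem x hx).2).symm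
  have ha : a ∈ Icc a₁ b₁ := hab₁ (left_mem_Icc.2 hab.le)
  have hb : b ∈ Icc a₁ b₁ := hab₁ (right_mem_Icc.2 hab.le)
  rw [← intervalIntegral.integral_const_mul, ← intervalIntegral.integral_const_mul, ← hA]
  constructor
  · refine integral_mul_mono_of_symm (f₁ := fun _ => f A) hy0.le (hgy.const_mul _) hfgy
      hg_nonneg hg_symm fun x hx => ?_
    linarith [hf_conv.two_mul_le_add_reflect (c := A) (hab₁ (hmem x hx).1) (hab₁ (hmem x hx).2)]
  · refine integral_mul_mono_of_symm (f₂ := fun _ => (p * f a + q * f b) / (p + q)) hy0.le hfgy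
      (hgy.const_mul _) hg_nonneg hg_symm fun x hx => ?_
    linarith [hf_conv.add_reflect_le_weighted_mean (add_pos hp hq).ne' hA ha hb hab
      (hmem x hx).1 (hmem x hx).2]
end

section
/- Let 0 < a < b be real numbers and let p ∈ (−∞,−1) ∪ (−1,0) ∪ [1,∞). Then for every x ∈ (a,b], (b−a)·( (aᵖ+bᵖ)/2 − (b^{p+1}−a^{p+1})/((p+1)(b−a)) ) ≥ (x−a)·( (aᵖ+xᵖ)/2 − (x^{p+1}−a^{p+1})/((p+1)(x−a)) ). Equivalently, (b−a)·( [A_p(a,b)]ᵖ − [L_p(a,b)]ᵖ ) ≥ (x−a)·( [A_p(a,x)]ᵖ − [L_p(a,x)]ᵖ ), where A_p(u,v) = ((uᵖ+vᵖ)/2)^{1/p} is the power mean and L_p(u,v) = ((v^{p+1}−u^{p+1})/((p+1)(v−u)))^{1/p} is the p-logarithmic mean. -/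
/-!
Both sides are values at `y = x` and `y = b` of the error of the trapezoid rule for
`∫ₐʸ tᵖ dt`. Its derivative in `y` is half the gap at `a` between `t ↦ tᵖ` and its tangent
line at `y`, which is nonnegative because `t ↦ tᵖ` is convex on `(0, ∞)` when `p ≤ 0` or
`1 ≤ p`; hence the error increases with `y`.
-/

open Real Set

lemma convexOn_rpow_of_nonpos {p : ℝ} (hp : p ≤ 0) : ConvexOn ℝ (Ioi 0) fun x : ℝ ↦ x ^ p := by
  have hg : ConvexOn ℝ univ fun t : ℝ ↦ exp (p * t) :=
    convexOn_exp.comp_linearMap (LinearMap.mulLeft ℝ p)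
  have hanti : AntitoneOn (fun t : ℝ ↦ exp (p * t)) univ := fun s _ t _ hst ↦
    exp_le_exp.mpr (mul_le_mul_of_nonpos_left hst hp)
  have himage : log '' Ioi 0 = univ :=
    eq_univ_of_forall fun t ↦ ⟨exp t, exp_pos t, log_exp t⟩
  refine ((hg.subset (subset_univ _) (himage ▸ convex_univ)).comp_concaveOn
    strictConcaveOn_log_Ioi.concaveOn (hanti.mono (subset_univ _))).congr fun x hx ↦ ?_
  simp [rpow_def_of_pos (mem_Ioi.mp hx), mul_comm]

lemma convexOn_rpow_Ioi {p : ℝ} (hp : p ≤ 0 ∨ 1 ≤ p) :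
    ConvexOn ℝ (Ioi 0) fun x : ℝ ↦ x ^ p :=
  hp.elim convexOn_rpow_of_nonpos fun hp ↦
    (convexOn_rpow hp).subset Ioi_subset_Ici_self (convex_Ioi 0)

/-- The error of the trapezoid rule for `∫ₐʸ f`, written with an antiderivative `G` of `f`. -/
noncomputable def trapezoidError (f G : ℝ → ℝ) (a y : ℝ) : ℝ :=
  (y - a) * (f a + f y) / 2 - (G y - G a)

lemma ConvexOn.monotoneOn_trapezoidError {f f' G : ℝ → ℝ} {a b : ℝ}
    (hf : ConvexOn ℝ (Icc a b) f) (hf' : ∀ y ∈ Icc a b, HasDerivAt f (f' y) y)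
    (hG : ∀ y ∈ Icc a b, HasDerivAt G (f y) y) :
    MonotoneOn (trapezoidError f G a) (Icc a b) := by
  have hderiv : ∀ y ∈ Icc a b, HasDerivAt (trapezoidError f G a)
      ((f a - f y + (y - a) * f' y) / 2) y := by
    intro y hy
    unfold trapezoidError
    exact ((((hasDerivAt_id' y).sub_const a).mul ((hf' y hy).const_add (f a))).div_const 2).sub
      ((hG y hy).sub_const (G a)) |>.congr_deriv (by ring)
  refine monotoneOn_of_deriv_nonneg (convex_Icc a b)
    (fun y hy ↦ (hderiv y hy).continuousAt.continuousWithinAt)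
    (fun y hy ↦ ?_) (fun y hy ↦ ?_) <;> rw [interior_Icc] at hy
  · exact (hderiv y (Ioo_subset_Icc_self hy)).differentiableAt.differentiableWithinAt
  rw [(hderiv y (Ioo_subset_Icc_self hy)).deriv]
  have hslope := hf.slope_le_of_hasDerivAt (left_mem_Icc.mpr (hy.1.trans hy.2).le)
    (Ioo_subset_Icc_self hy) hy.1 (hf' y (Ioo_subset_Icc_self hy))
  rw [slope_def_field, div_le_iff₀ (sub_pos.mpr hy.1)] at hslope
  linarith

/-- Application (AL): for `0 < a < b`, `p ∈ (−∞,−1) ∪ (−1,0) ∪ [1,∞)` and `x ∈ (a,b]`: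
`(b−a)·((aᵖ+bᵖ)/2 − (b^{p+1}−a^{p+1})/((p+1)(b−a)))
  ≥ (x−a)·((aᵖ+xᵖ)/2 − (x^{p+1}−a^{p+1})/((p+1)(x−a)))`,
i.e. `(b−a)·([A_p(a,b)]ᵖ − [L_p(a,b)]ᵖ) ≥ (x−a)·([A_p(a,x)]ᵖ − [L_p(a,x)]ᵖ)`. -/
theorem fejer_stmt_15 (a b p : ℝ) (ha : 0 < a) (hab : a < b)
    (hp : p < -1 ∨ (-1 < p ∧ p < 0) ∨ 1 ≤ p)
    (x : ℝ) (hx : x ∈ Set.Ioc a b) :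
    (x - a) * ((a ^ p + x ^ p) / 2
        - (x ^ (p + 1) - a ^ (p + 1)) / ((p + 1) * (x - a)))
      ≤ (b - a) * ((a ^ p + b ^ p) / 2
        - (b ^ (p + 1) - a ^ (p + 1)) / ((p + 1) * (b - a))) := by
  have hp1 : p + 1 ≠ 0 := by
    rcases hp with h | ⟨h, _⟩ | h <;> intro hc <;> linarith
  have hconvex : p ≤ 0 ∨ 1 ≤ p := by
    rcases hp with h | ⟨_, h⟩ | h
    exacts [Or.inl (by linarith), Or.inl h.le, Or.inr h]
  have hpos : Icc a b ⊆ Ioi 0 := fun y hy ↦ ha.trans_le hy.1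
  have hmono := ConvexOn.monotoneOn_trapezoidError (G := fun y ↦ y ^ (p + 1) / (p + 1))
    ((convexOn_rpow_Ioi hconvex).subset hpos (convex_Icc a b))
    (fun y hy ↦ hasDerivAt_rpow_const (Or.inl (hpos hy).ne'))
    (fun y hy ↦ by
      simpa [hp1] using
        (hasDerivAt_rpow_const (p := p + 1) (Or.inl (hpos hy).ne')).div_const (p + 1))
  have hform : ∀ y, a < y → (y - a) * ((a ^ p + y ^ p) / 2
      - (y ^ (p + 1) - a ^ (p + 1)) / ((p + 1) * (y - a)))
        = trapezoidError (· ^ p) (fun y ↦ y ^ (p + 1) / (p + 1)) a y := by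
    intro y hy
    have : y - a ≠ 0 := sub_ne_zero.mpr hy.ne'
    simp only [trapezoidError]
    field_simp
  rw [hform x hx.1, hform b hab]
  exact hmono ⟨hx.1.le, hx.2⟩ ⟨hab.le, le_rfl⟩ hx.2
end

section
/- Let 0 < a < b be real numbers. Then for every x ∈ (a,b], (b−a)·( 1/H(a,b) − 1/L(a,b) ) ≥ (x−a)·( 1/H(a,x) − 1/L(a,x) ), where H(u,v) = 2uv/(u+v) is the harmonic mean and L(u,v) = (v−u)/(log v − log u) is the logarithmic mean (with L(u,u) = u). Explicitly: (b−a)·( (a+b)/(2ab) − (log b − log a)/(b−a) ) ≥ (x−a)·( (a+x)/(2ax) − (log x − log a)/(x−a) ) for x ∈ (a,b). -/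
open Real

/-
With `a` fixed, `(t - a) * (1 / H(a,t) - 1 / L(a,t))` simplifies to `t / (2a) - a / (2t) - log t + log a`,
whose derivative `(t - a)² / (2at²)` is nonnegative; so the expression is monotone in `t > 0`.
-/

/-- At `t = a` both sides vanish, the left one through the junk value `0 / 0 = 0`. -/
lemma sub_mul_harmonic_sub_log_eq {a t : ℝ} (ha : a ≠ 0) (ht : t ≠ 0) :
    (t - a) * ((a + t) / (2 * a * t) - (log t - log a) / (t - a))
      = t / (2 * a) - a / (2 * t) - log t + log a := by
  rcases eq_or_ne t a with rfl | hta
  · field_simp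
    ring
  · have : t - a ≠ 0 := sub_ne_zero.mpr hta
    field_simp
    ring

lemma hasDerivAt_div_sub_div_sub_log {a t : ℝ} (ha : a ≠ 0) (ht : t ≠ 0) :
    HasDerivAt (fun s => s / (2 * a) - a / (2 * s) - log s) ((t - a) ^ 2 / (2 * a * t ^ 2)) t := by
  have h : HasDerivAt (fun s => s / (2 * a) - a / 2 * s⁻¹ - log s)
      (1 / (2 * a) - a / 2 * -(t ^ 2)⁻¹ - t⁻¹) t :=
    (((hasDerivAt_id' t).div_const (2 * a)).sub ((hasDerivAt_inv ht).const_mul (a / 2))).sub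
      (hasDerivAt_log ht)
  convert h using 1
  · funext s
    ring
  · field_simp
    ring

lemma monotoneOn_div_sub_div_sub_log {a : ℝ} (ha : 0 < a) :
    MonotoneOn (fun t => t / (2 * a) - a / (2 * t) - log t) (Set.Ioi 0) := by
  have hderiv : ∀ t ∈ Set.Ioi (0 : ℝ),
      HasDerivAt (fun s => s / (2 * a) - a / (2 * s) - log s) ((t - a) ^ 2 / (2 * a * t ^ 2)) t :=
    fun t ht => hasDerivAt_div_sub_div_sub_log ha.ne' (ne_of_gt ht)
  refine monotoneOn_of_hasDerivWithinAt_nonneg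
    (f' := fun t => (t - a) ^ 2 / (2 * a * t ^ 2)) (convex_Ioi 0)
    (fun t ht => (hderiv t ht).continuousAt.continuousWithinAt) (fun t ht => ?_) (fun t _ => ?_)
  · rw [interior_Ioi] at ht
    exact (hderiv t ht).hasDerivWithinAt
  · positivity

theorem fejer_stmt_16_general (a b : ℝ) (ha : 0 < a)
    (x : ℝ) (hx : x ∈ Set.Ioc a b) :
    (x - a) * ((a + x) / (2 * a * x) - (Real.log x - Real.log a) / (x - a))
      ≤ (b - a) * ((a + b) / (2 * a * b) - (Real.log b - Real.log a) / (b - a)) := by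
  obtain ⟨hax, hxb⟩ := hx
  have hx0 : 0 < x := ha.trans hax
  have hb0 : 0 < b := hx0.trans_le hxb
  rw [sub_mul_harmonic_sub_log_eq ha.ne' hx0.ne', sub_mul_harmonic_sub_log_eq ha.ne' hb0.ne']
  linarith [monotoneOn_div_sub_div_sub_log ha hx0 hb0 hxb]

/-- Application (harmonic/logarithmic means): for `0 < a < b` and `x ∈ (a,b]`:
`(b−a)·(1/H(a,b) − 1/L(a,b)) ≥ (x−a)·(1/H(a,x) − 1/L(a,x))`, explicitly
`(b−a)·((a+b)/(2ab) − (log b − log a)/(b−a)) ≥ (x−a)·((a+x)/(2ax) − (log x − log a)/(x−a))`. -/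
theorem fejer_stmt_16 (a b : ℝ) (ha : 0 < a) (hab : a < b)
    (x : ℝ) (hx : x ∈ Set.Ioc a b) :
    (x - a) * ((a + x) / (2 * a * x) - (Real.log x - Real.log a) / (x - a))
      ≤ (b - a) * ((a + b) / (2 * a * b) - (Real.log b - Real.log a) / (b - a)) :=
  fejer_stmt_16_general a b ha x hx
end

section
/- Let 0 < a < b be real numbers. Then for every x ∈ (a,b), ( A(a,b)/I(a,b) )^{b−a} ≥ ( A(a,x)/I(a,x) )^{x−a}, where A(u,v) = (u+v)/2 is the arithmetic mean and I(u,v) = (1/e)·(v^v/u^u)^{1/(v−u)} is the identric mean. Explicitly: (b−a)·( log((a+b)/2) − (b·log b − a·log a)/(b−a) + 1 ) ≥ (x−a)·( log((a+x)/2) − (x·log x − a·log a)/(x−a) + 1 ). -/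
/-!
`y ↦ (y - a) · log (A(a, y) / I(a, y))` is increasing on `y > 0`: its derivative is
`log (A(a, y) / y) + (y - a) / (a + y)`, which is nonnegative by `log t ≤ t - 1` at `t = 2y / (a + y)`.
-/

open Real Set

/-- `(y - a) · log (A(a, y) / I(a, y))`, multiplied out so that it has no division by `y - a`. -/
noncomputable def scaledLogAI (a y : ℝ) : ℝ :=
  (y - a) * (log ((a + y) / 2) + 1) - y * log y + a * log a

lemma scaledLogAI_eq {a y : ℝ} (h : y ≠ a) :
    (y - a) * (log ((a + y) / 2) - (y * log y - a * log a) / (y - a) + 1) = scaledLogAI a y := by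
  have : y - a ≠ 0 := sub_ne_zero.mpr h
  rw [scaledLogAI]
  field_simp
  ring

lemma hasDerivAt_scaledLogAI {a y : ℝ} (hay : 0 < a + y) (hy : y ≠ 0) :
    HasDerivAt (scaledLogAI a) (log ((a + y) / 2) - log y + (y - a) / (a + y)) y := by
  have hmid : HasDerivAt (fun y ↦ log ((a + y) / 2)) (1 / (a + y)) y := by
    convert (((hasDerivAt_id' y).const_add a).div_const 2).log (by positivity) using 1
    field_simp
  have := ((((hasDerivAt_id' y).sub_const a).mul (hmid.add_const 1)).sub
    (hasDerivAt_mul_log hy)).add_const (a * log a)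
  refine this.congr_deriv ?_
  field_simp
  ring

lemma log_sub_log_midpoint_le {a y : ℝ} (hay : 0 < a + y) (hy : 0 < y) :
    log y - log ((a + y) / 2) ≤ (y - a) / (a + y) :=
  calc log y - log ((a + y) / 2) = log (2 * y / (a + y)) := by
        rw [← log_div hy.ne' (by positivity)]
        congr 1
        field_simp
    _ ≤ 2 * y / (a + y) - 1 := log_le_sub_one_of_pos (by positivity)
    _ = (y - a) / (a + y) := by
        field_simp
        ring

lemma monotoneOn_scaledLogAI {a : ℝ} (ha : 0 ≤ a) : MonotoneOn (scaledLogAI a) (Ioi 0) := by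
  have hpos {y : ℝ} (hy : y ∈ Ioi 0) : 0 < a + y := by linarith [mem_Ioi.mp hy]
  have hderiv {y : ℝ} (hy : y ∈ Ioi 0) :=
    hasDerivAt_scaledLogAI (hpos hy) (ne_of_gt hy)
  refine monotoneOn_of_hasDerivWithinAt_nonneg (convex_Ioi 0)
    (fun y hy ↦ (hderiv hy).continuousAt.continuousWithinAt)
    (fun y hy ↦ (hderiv (interior_subset hy)).hasDerivWithinAt) fun y hy ↦ ?_
  have hy : y ∈ Ioi 0 := interior_subset hy
  linarith [log_sub_log_midpoint_le (hpos hy) hy]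

theorem fejer_stmt_17_general (a b : ℝ) (ha : 0 < a)
    (x : ℝ) (hx : x ∈ Set.Ioo a b) :
    (x - a) * (Real.log ((a + x) / 2)
        - (x * Real.log x - a * Real.log a) / (x - a) + 1)
      ≤ (b - a) * (Real.log ((a + b) / 2)
        - (b * Real.log b - a * Real.log a) / (b - a) + 1) := by
  obtain ⟨hax, hxb⟩ := hx
  rw [scaledLogAI_eq hax.ne', scaledLogAI_eq (hax.trans hxb).ne']
  exact monotoneOn_scaledLogAI ha.le (ha.trans hax) (ha.trans (hax.trans hxb)) hxb.le

/-- Application (arithmetic/identric means): for `0 < a < b` and `x ∈ (a,b)`: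
`(A(a,b)/I(a,b))^{b−a} ≥ (A(a,x)/I(a,x))^{x−a}`, written explicitly as
`(b−a)·(log((a+b)/2) − (b·log b − a·log a)/(b−a) + 1)
  ≥ (x−a)·(log((a+x)/2) − (x·log x − a·log a)/(x−a) + 1)`. -/
theorem fejer_stmt_17 (a b : ℝ) (ha : 0 < a) (hab : a < b)
    (x : ℝ) (hx : x ∈ Set.Ioo a b) :
    (x - a) * (Real.log ((a + x) / 2)
        - (x * Real.log x - a * Real.log a) / (x - a) + 1)
      ≤ (b - a) * (Real.log ((a + b) / 2)
        - (b * Real.log b - a * Real.log a) / (b - a) + 1) :=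
  fejer_stmt_17_general a b ha x hx
end

section
/- Let 0 < a ≤ b be real numbers and let λ ∈ [0,1]. Then exp( λ(1−λ)(a−b)²/(2b²) ) ≤ (λa + (1−λ)b)/(a^λ · b^{1−λ}) ≤ exp( λ(1−λ)(a−b)²/(2a²) ). In particular, since the left-hand side is at least 1, this refines Young's inequality a^λ b^{1−λ} ≤ λa + (1−λ)b. -/
/-!
Both bounds are the two-point Jensen inequality for `log` with a quadratic correction. Since
`log'' x = -1/x²` lies in `[-1/a², -1/b²]` on `[a, b]`, the function `log` is `1/b²`-strongly
concave on `(0, b]` and `(-1/a²)`-strongly convex (i.e. `log x + x²/(2a²)` is convex) on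
`[a, ∞)`. Applied at the points `a, b` with weights `λ, 1 - λ`, this bounds the gap
`log (λa + (1-λ)b) - (λ log a + (1-λ) log b)`, whose exponential is the ratio in question.
-/

open Real Set

section SecondDerivative

variable {D : Set ℝ} {f f' f'' : ℝ → ℝ} {m : ℝ}

lemma strongConvexOn_of_hasDerivWithinAt2_ge (hD : Convex ℝ D) (hf : ContinuousOn f D)
    (hf' : ∀ x ∈ interior D, HasDerivWithinAt f (f' x) (interior D) x)
    (hf'' : ∀ x ∈ interior D, HasDerivWithinAt f' (f'' x) (interior D) x)
    (hm : ∀ x ∈ interior D, m ≤ f'' x) : StrongConvexOn D m f := by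
  simp_rw [strongConvexOn_iff_convex, Real.norm_eq_abs, sq_abs]
  have hsq (x : ℝ) : HasDerivAt (fun y ↦ m / 2 * y ^ 2) (m * x) x :=
    ((hasDerivAt_pow 2 x).const_mul (m / 2)).congr_deriv (by push_cast; ring)
  refine convexOn_of_hasDerivWithinAt2_nonneg hD (f' := fun x ↦ f' x - m * x)
    (f'' := fun x ↦ f'' x - m) (hf.sub (by fun_prop)) (fun x hx ↦ ?_) (fun x hx ↦ ?_)
    (fun x hx ↦ sub_nonneg.2 (hm x hx))
  · exact (hf' x hx).sub (hsq x).hasDerivWithinAt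
  · simpa using (hf'' x hx).fun_sub ((hasDerivAt_id' x).const_mul m).hasDerivWithinAt

lemma strongConcaveOn_of_hasDerivWithinAt2_le (hD : Convex ℝ D) (hf : ContinuousOn f D)
    (hf' : ∀ x ∈ interior D, HasDerivWithinAt f (f' x) (interior D) x)
    (hf'' : ∀ x ∈ interior D, HasDerivWithinAt f' (f'' x) (interior D) x)
    (hm : ∀ x ∈ interior D, f'' x ≤ -m) : StrongConcaveOn D m f := by
  have h := strongConvexOn_of_hasDerivWithinAt2_ge hD hf.neg (fun x hx ↦ (hf' x hx).neg)
    (fun x hx ↦ (hf'' x hx).neg) (fun x hx ↦ le_neg.1 (hm x hx))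
  have := h.neg
  rwa [neg_neg] at this

end SecondDerivative

lemma strongConcaveOn_log_Ioc (b : ℝ) : StrongConcaveOn (Ioc 0 b) (b ^ 2)⁻¹ log := by
  refine strongConcaveOn_of_hasDerivWithinAt2_le (convex_Ioc 0 b)
    (continuousOn_log.mono fun x hx ↦ hx.1.ne') (f' := (·⁻¹)) (f'' := fun x ↦ -(x ^ 2)⁻¹)
    (fun x hx ↦ ?_) (fun x hx ↦ ?_) (fun x hx ↦ ?_) <;> rw [interior_Ioc] at hx
  · exact (hasDerivAt_log hx.1.ne').hasDerivWithinAt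
  · exact (hasDerivAt_inv hx.1.ne').hasDerivWithinAt
  · exact neg_le_neg (inv_anti₀ (pow_pos hx.1 2) (pow_le_pow_left₀ hx.1.le hx.2.le 2))

lemma strongConvexOn_log_Ici {a : ℝ} (ha : 0 < a) :
    StrongConvexOn (Ici a) (-(a ^ 2)⁻¹) log := by
  refine strongConvexOn_of_hasDerivWithinAt2_ge (convex_Ici a)
    (continuousOn_log.mono fun x hx ↦ (ha.trans_le hx).ne') (f' := (·⁻¹))
    (f'' := fun x ↦ -(x ^ 2)⁻¹) (fun x hx ↦ ?_) (fun x hx ↦ ?_) (fun x hx ↦ ?_)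
    <;> rw [interior_Ici] at hx
  · exact (hasDerivAt_log (ha.trans hx).ne').hasDerivWithinAt
  · exact (hasDerivAt_inv (ha.trans hx).ne').hasDerivWithinAt
  · exact neg_le_neg (inv_anti₀ (by positivity) (pow_le_pow_left₀ ha.le hx.le 2))

lemma rpow_mul_rpow_eq_exp {a b : ℝ} (ha : 0 < a) (hb : 0 < b) (s t : ℝ) :
    a ^ s * b ^ t = exp (s * log a + t * log b) := by
  rw [rpow_def_of_pos ha, rpow_def_of_pos hb, ← exp_add, mul_comm s, mul_comm t]

/-- Refinement and reverse of Young's inequality (3): for `0 < a ≤ b` and `λ ∈ [0,1]`,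
`exp(λ(1−λ)(a−b)²/(2b²)) ≤ (λa+(1−λ)b)/(a^λ·b^{1−λ}) ≤ exp(λ(1−λ)(a−b)²/(2a²))`. -/
theorem fejer_stmt_18 (a b : ℝ) (ha : 0 < a) (hab : a ≤ b)
    (l : ℝ) (hl : l ∈ Set.Icc (0 : ℝ) 1) :
    Real.exp (l * (1 - l) * (a - b) ^ 2 / (2 * b ^ 2))
        ≤ (l * a + (1 - l) * b) / (a ^ l * b ^ (1 - l)) ∧
    (l * a + (1 - l) * b) / (a ^ l * b ^ (1 - l))
        ≤ Real.exp (l * (1 - l) * (a - b) ^ 2 / (2 * a ^ 2)) := by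
  obtain ⟨hl0, hl1⟩ := hl
  have hb : 0 < b := ha.trans_le hab
  have hmean : 0 < l * a + (1 - l) * b := by nlinarith
  have hlower := (strongConcaveOn_log_Ioc b).2 ⟨ha, hab⟩ ⟨hb, le_rfl⟩ hl0 (sub_nonneg.2 hl1)
    (add_sub_cancel l 1)
  have hupper := (strongConvexOn_log_Ici ha).2 (mem_Ici.2 le_rfl) (mem_Ici.2 hab) hl0
    (sub_nonneg.2 hl1) (add_sub_cancel l 1)
  simp only [smul_eq_mul, Real.norm_eq_abs, sq_abs] at hlower hupper
  rw [rpow_mul_rpow_eq_exp ha hb, ← exp_log hmean, ← exp_sub, exp_le_exp, exp_le_exp]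
  constructor
  · have : l * (1 - l) * (a - b) ^ 2 / (2 * b ^ 2)
        = l * (1 - l) * ((b ^ 2)⁻¹ / 2 * (a - b) ^ 2) := by
      field_simp
    linarith
  · have : l * (1 - l) * (a - b) ^ 2 / (2 * a ^ 2)
        = -(l * (1 - l) * (-(a ^ 2)⁻¹ / 2 * (a - b) ^ 2)) := by
      field_simp
    linarith
end

section
/- Let 0 < a ≤ b be real numbers and let λ ∈ [0,1]. Then λ(1−λ)·(a/2)·(log(a/b))² ≤ λa + (1−λ)b − a^λ · b^{1−λ} ≤ λ(1−λ)·(b/2)·(log(a/b))². -/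
/-!
With `x = log a` and `y = log b`, the middle term is the Jensen gap
`λ eˣ + (1 - λ) eʸ - e^(λx + (1 - λ)y)` of `exp`. On `[x, y]` we have `a ≤ exp'' ≤ b`, so
`exp t - (a/2) t²` and `(b/2) t² - exp t` are convex there, while the Jensen gap of `(c/2) t²` is
exactly `λ(1 - λ)(c/2)(x - y)²`.
-/

open Real Set

section JensenGap

variable {f : ℝ → ℝ} {s : Set ℝ} {x y a b : ℝ}

theorem le_jensen_gap_of_convexOn_sub_sq {m : ℝ} (hf : ConvexOn ℝ s fun t => f t - m / 2 * t ^ 2)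
    (hx : x ∈ s) (hy : y ∈ s) (ha : 0 ≤ a) (hb : 0 ≤ b) (hab : a + b = 1) :
    a * b * (m / 2) * (x - y) ^ 2 ≤ a * f x + b * f y - f (a * x + b * y) := by
  have h := hf.2 hx hy ha hb hab
  simp only [smul_eq_mul] at h
  obtain rfl : b = 1 - a := by linarith
  linear_combination h

theorem jensen_gap_le_of_convexOn_sq_sub {M : ℝ} (hf : ConvexOn ℝ s fun t => M / 2 * t ^ 2 - f t)
    (hx : x ∈ s) (hy : y ∈ s) (ha : 0 ≤ a) (hb : 0 ≤ b) (hab : a + b = 1) :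
    a * f x + b * f y - f (a * x + b * y) ≤ a * b * (M / 2) * (x - y) ^ 2 := by
  have h := hf.2 hx hy ha hb hab
  simp only [smul_eq_mul] at h
  obtain rfl : b = 1 - a := by linarith
  linear_combination h

end JensenGap

theorem convexOn_exp_sub_mul_sq {m : ℝ} (hm : 0 < m) :
    ConvexOn ℝ (Ici (log m)) fun t => exp t - m / 2 * t ^ 2 := by
  refine convexOn_of_hasDerivWithinAt2_nonneg (convex_Ici _) (by fun_prop)
    (f' := fun t => exp t - m * t) (f'' := fun t => exp t - m) ?_ ?_ ?_
  · intro t _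
    exact (((hasDerivAt_exp t).sub ((hasDerivAt_pow 2 t).const_mul (m / 2))).congr_deriv
      (by ring)).hasDerivWithinAt
  · intro t _
    exact (((hasDerivAt_exp t).sub ((hasDerivAt_id t).const_mul m)).congr_deriv
      (by simp)).hasDerivWithinAt
  · intro t ht
    rw [interior_Ici, mem_Ioi] at ht
    have hexp := exp_lt_exp.2 ht
    rw [exp_log hm] at hexp
    exact sub_nonneg.2 hexp.le

theorem convexOn_mul_sq_sub_exp {M : ℝ} (hM : 0 < M) :
    ConvexOn ℝ (Iic (log M)) fun t => M / 2 * t ^ 2 - exp t := by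
  refine convexOn_of_hasDerivWithinAt2_nonneg (convex_Iic _) (by fun_prop)
    (f' := fun t => M * t - exp t) (f'' := fun t => M - exp t) ?_ ?_ ?_
  · intro t _
    exact ((((hasDerivAt_pow 2 t).const_mul (M / 2)).sub (hasDerivAt_exp t)).congr_deriv
      (by ring)).hasDerivWithinAt
  · intro t _
    exact ((((hasDerivAt_id t).const_mul M).sub (hasDerivAt_exp t)).congr_deriv
      (by simp)).hasDerivWithinAt
  · intro t ht
    rw [interior_Iic, mem_Iio] at ht
    have hexp := exp_lt_exp.2 ht
    rw [exp_log hM] at hexp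
    exact sub_nonneg.2 hexp.le

/-- Improvement of Young's inequality (5): for `0 < a ≤ b` and `λ ∈ [0,1]`,
`λ(1−λ)·(a/2)·log²(a/b) ≤ λa+(1−λ)b − a^λ·b^{1−λ} ≤ λ(1−λ)·(b/2)·log²(a/b)`. -/
theorem fejer_stmt_19 (a b : ℝ) (ha : 0 < a) (hab : a ≤ b)
    (l : ℝ) (hl : l ∈ Set.Icc (0 : ℝ) 1) :
    l * (1 - l) * (a / 2) * (Real.log (a / b)) ^ 2
        ≤ l * a + (1 - l) * b - a ^ l * b ^ (1 - l) ∧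
    l * a + (1 - l) * b - a ^ l * b ^ (1 - l)
        ≤ l * (1 - l) * (b / 2) * (Real.log (a / b)) ^ 2 := by
  obtain ⟨hl₀, hl₁⟩ := hl
  have hb : 0 < b := ha.trans_le hab
  have hlog_le : log a ≤ log b := log_le_log ha hab
  have hgeom : exp (l * log a + (1 - l) * log b) = a ^ l * b ^ (1 - l) := by
    rw [exp_add, rpow_def_of_pos ha, rpow_def_of_pos hb, mul_comm l, mul_comm (1 - l)]
  have hlog_div : log (a / b) = log a - log b := log_div ha.ne' hb.ne'
  have hl' : 0 ≤ 1 - l := by linarith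
  have hsum : l + (1 - l) = 1 := by ring
  constructor
  · have h := le_jensen_gap_of_convexOn_sub_sq (convexOn_exp_sub_mul_sq ha) (mem_Ici.2 le_rfl)
      (mem_Ici.2 hlog_le) hl₀ hl' hsum
    rwa [exp_log ha, exp_log hb, hgeom, ← hlog_div] at h
  · have h := jensen_gap_le_of_convexOn_sq_sub (convexOn_mul_sq_sub_exp hb) (mem_Iic.2 hlog_le)
      (mem_Iic.2 le_rfl) hl₀ hl' hsum
    rwa [exp_log ha, exp_log hb, hgeom, ← hlog_div] at h
end
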